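/- arXiv:1706.05480 — 4 statements merged into one kernel-verified Lean document; each statement's English description precedes it below -/
import Mathlib

section
/- For every positive integer n, the only solution in positive integers (x, y, z) of the Diophantine equation (4n²−1)^x + (4n)^y = (4n²+1)^z is (x, y, z) = (2, 2, 2). -/
private lemma sq_one_pow_even {A M : ℤ} (h : A ^ 2 ≡ 1 [ZMOD M]) (k : ℕ) :
    A ^ (2 * k) ≡ 1 [ZMOD M] := by
  rw [pow_mul]
  calc (A ^ 2) ^ k ≡ 1 ^ k [ZMOD M] := h.pow k
    _ = 1 := one_pow k

private lemma sq_one_pow_odd {A M : ℤ} (h : A ^ 2 ≡ 1 [ZMOD M]) (k : ℕ) :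
    A ^ (2 * k + 1) ≡ A [ZMOD M] := by
  rw [pow_add, pow_mul, pow_one]
  calc (A ^ 2) ^ k * A ≡ 1 ^ k * A [ZMOD M] := (h.pow k).mul_right A
    _ = A := by ring

private lemma modc {N M : ℤ} (h : M ∣ 4 * N ^ 2) : 4 * N ^ 2 + 1 ≡ 1 [ZMOD M] := by
  refine (Int.modEq_iff_dvd.mpr ?_).symm
  simpa using h

private lemma moda {N M : ℤ} (h : M ∣ 4 * N ^ 2) : 4 * N ^ 2 - 1 ≡ -1 [ZMOD M] := by
  rw [Int.modEq_iff_dvd]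
  have : (-1 : ℤ) - (4 * N ^ 2 - 1) = -(4 * N ^ 2) := by ring
  rw [this]
  exact dvd_neg.mpr h

private lemma moda2 {N M : ℤ} (h : M ∣ 4 * N ^ 2) : (4 * N ^ 2 - 1) ^ 2 ≡ 1 [ZMOD M] := by
  refine (Int.modEq_iff_dvd.mpr ?_).symm
  have : (4 * N ^ 2 - 1) ^ 2 - 1 = (4 * N ^ 2) * (4 * N ^ 2 - 2) := by ring
  rw [this]
  exact h.mul_right _

/-- A divisor of `(4n)^y` that is `≡ 2 mod 4n` must be equal to `2`. -/
private lemma factor_eq_two {n G y : ℕ} (hn : 0 < n) (hG : G ∣ (4 * n) ^ y)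
    (hmod : (G : ℤ) ≡ 2 [ZMOD 4 * (n : ℤ)]) : G = 2 := by
  have hdvdsub : (4 * (n : ℤ)) ∣ (G : ℤ) - 2 := Int.ModEq.dvd hmod.symm
  have hn1 : (1 : ℤ) ≤ (n : ℤ) := by exact_mod_cast hn
  have h4 : (4 : ℤ) ≤ 4 * (n : ℤ) := by linarith
  have hG1 : G ≠ 1 := by
    rintro rfl
    have h1 : (4 * (n : ℤ)) ∣ 1 := by
      have : (4 * (n : ℤ)) ∣ -1 := by simpa using hdvdsub
      exact (dvd_neg).mp this
    have := Int.le_of_dvd (by norm_num) h1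
    linarith
  have hG0 : G ≠ 0 := by
    rintro rfl
    have h1 : (4 * (n : ℤ)) ∣ 2 := by
      have : (4 * (n : ℤ)) ∣ -2 := by simpa using hdvdsub
      exact (dvd_neg).mp this
    have := Int.le_of_dvd (by norm_num) h1
    linarith
  have hprime : ∀ {p : ℕ}, Nat.Prime p → p ∣ G → p = 2 := by
    intro p hp hpG
    have hp4n : p ∣ 4 * n := hp.dvd_of_dvd_pow (hpG.trans hG)
    have hpz : (p : ℤ) ∣ (G : ℤ) - 2 := by
      refine dvd_trans ?_ hdvdsub
      have := Int.natCast_dvd_natCast.mpr hp4n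
      push_cast at this
      exact this
    have hpG' : (p : ℤ) ∣ (G : ℤ) := Int.natCast_dvd_natCast.mpr hpG
    have : (p : ℤ) ∣ 2 := by
      have := dvd_sub hpG' hpz
      simpa using this
    have hp2 : p ∣ 2 := by exact_mod_cast this
    exact (Nat.prime_dvd_prime_iff_eq hp Nat.prime_two).mp hp2
  obtain hpow := Nat.eq_prime_pow_of_unique_prime_dvd hG0 hprime
  set k := G.primeFactorsList.length with hk
  rcases Nat.lt_or_ge k 2 with hk2 | hk2
  · interval_cases k
    · simp at hpow; omega
    · simpa using hpow
  · exfalso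
    have h4G : (4 : ℤ) ∣ (G : ℤ) := by
      rw [hpow]
      push_cast
      calc (4 : ℤ) = 2 ^ 2 := by norm_num
        _ ∣ 2 ^ k := pow_dvd_pow 2 hk2
    have h42 : (4 : ℤ) ∣ 2 := by
      have h4sub : (4 : ℤ) ∣ (G : ℤ) - 2 := dvd_trans ⟨(n : ℤ), by ring⟩ hdvdsub
      have := dvd_sub h4G h4sub
      simpa using this
    norm_num at h42

set_option maxHeartbeats 1000000 in
theorem lu_theorem (n : ℕ) (hn : 0 < n) :
    ∀ x y z : ℕ, 0 < x → 0 < y → 0 < z →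
      ((4 * n ^ 2 - 1) ^ x + (4 * n) ^ y = (4 * n ^ 2 + 1) ^ z ↔ x = 2 ∧ y = 2 ∧ z = 2) := by
  have hn2 : 0 < n ^ 2 := pow_pos hn 2
  have h1n : (1 : ℕ) ≤ 4 * n ^ 2 := by omega
  intro x y z hx hy hz
  constructor
  · intro heq
    have heqZ : (4 * (n:ℤ) ^ 2 - 1) ^ x + (4 * (n:ℤ)) ^ y = (4 * (n:ℤ) ^ 2 + 1) ^ z := by
      zify [h1n] at heq
      exact_mod_cast heq
    have h4 : (4 : ℤ) ∣ 4 * (n:ℤ) ^ 2 := ⟨(n:ℤ) ^ 2, rfl⟩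
    -- Step 1 : x is even
    have hxeven : Even x := by
      rcases Nat.even_or_odd x with hxe | hxo
      · exact hxe
      · exfalso
        obtain ⟨k, hk⟩ := hxo
        have hAx : (4 * (n:ℤ) ^ 2 - 1) ^ x ≡ -1 [ZMOD 4] := by
          rw [hk]
          exact (sq_one_pow_odd (moda2 h4) k).trans (moda h4)
        have hBy : (4 * (n:ℤ)) ^ y ≡ 0 [ZMOD 4] := by
          rw [Int.modEq_zero_iff_dvd]
          exact dvd_pow ⟨(n:ℤ), rfl⟩ hy.ne'
        have hCz : (4 * (n:ℤ) ^ 2 + 1) ^ z ≡ 1 [ZMOD 4] := by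
          simpa using (modc h4).pow z
        have hfin : (-1 : ℤ) + 0 ≡ 1 [ZMOD 4] := by
          calc (-1 : ℤ) + 0 ≡ (4 * (n:ℤ) ^ 2 - 1) ^ x + (4 * (n:ℤ)) ^ y [ZMOD 4] :=
              (hAx.add hBy).symm
            _ = (4 * (n:ℤ) ^ 2 + 1) ^ z := heqZ
            _ ≡ 1 [ZMOD 4] := hCz
        have : (4 : ℤ) ∣ 2 := by simpa using hfin.dvd
        norm_num at this
    obtain ⟨X, hX⟩ := hxeven
    have hxX : x = 2 * X := by omega
    have hXpos : 0 < X := by omega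
    -- Step 2 : y ≥ 2
    have hy2 : 2 ≤ y := by
      by_contra hcon
      have hy1 : y = 1 := by omega
      subst hy1
      -- mod 4n² : forces n = 1
      have hMd : (4 * (n:ℤ) ^ 2 : ℤ) ∣ 4 * (n:ℤ) ^ 2 := dvd_rfl
      have hAx : (4 * (n:ℤ) ^ 2 - 1) ^ x ≡ 1 [ZMOD 4 * (n:ℤ) ^ 2] := by
        rw [hxX]; exact sq_one_pow_even (moda2 hMd) X
      have hCz : (4 * (n:ℤ) ^ 2 + 1) ^ z ≡ 1 [ZMOD 4 * (n:ℤ) ^ 2] := by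
        simpa using (modc hMd).pow z
      have hB : (4 * (n:ℤ)) ^ 1 ≡ 0 [ZMOD 4 * (n:ℤ) ^ 2] := by
        have h1 : (1 : ℤ) + (4 * (n:ℤ)) ^ 1 ≡ 1 + 0 [ZMOD 4 * (n:ℤ) ^ 2] := by
          calc (1 : ℤ) + (4 * (n:ℤ)) ^ 1
              ≡ (4 * (n:ℤ) ^ 2 - 1) ^ x + (4 * (n:ℤ)) ^ 1 [ZMOD 4 * (n:ℤ) ^ 2] :=
                (hAx.symm.add_right _)
            _ = (4 * (n:ℤ) ^ 2 + 1) ^ z := heqZ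
            _ ≡ 1 + 0 [ZMOD 4 * (n:ℤ) ^ 2] := by simpa using hCz
        exact h1.add_left_cancel' 1
      have hdvd : (4 * (n:ℤ) ^ 2 : ℤ) ∣ 4 * (n:ℤ) := by
        simpa using (Int.modEq_zero_iff_dvd).mp hB
      have hNpos : (0 : ℤ) < (n:ℤ) := by exact_mod_cast hn
      have hle := Int.le_of_dvd (by positivity) hdvd
      have hn1 : n = 1 := by nlinarith
      subst hn1
      norm_num at heq
      -- now heq : 3 ^ x + 4 = 5 ^ z
      have h9 : (3:ℕ) ^ x ≡ 9 [MOD 72] := by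
        obtain ⟨X', rfl⟩ : ∃ X', X = X' + 1 := ⟨X - 1, by omega⟩
        have h8 : (9:ℕ) ^ X' ≡ 1 [MOD 8] := by
          calc (9:ℕ) ^ X' ≡ 1 ^ X' [MOD 8] := Nat.ModEq.pow X' (by decide)
            _ = 1 := one_pow X'
        have := Nat.ModEq.mul_left' (c := 9) h8
        rw [hxX, pow_mul]
        norm_num
        calc (9:ℕ) ^ (X' + 1) = 9 * 9 ^ X' := by ring
          _ ≡ 9 * 1 [MOD 9 * 8] := this
          _ = 9 := by norm_num
      have h5 : (5:ℕ) ^ z ≡ 13 [MOD 72] := by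
        calc (5:ℕ) ^ z = 3 ^ x + 4 := heq.symm
          _ ≡ 9 + 4 [MOD 72] := h9.add_right 4
          _ = 13 := by norm_num
      have hz6 : (5:ℕ) ^ z ≡ 5 ^ (z % 6) [MOD 72] := by
        conv_lhs => rw [← Nat.div_add_mod z 6]
        rw [pow_add, pow_mul]
        calc ((5:ℕ) ^ 6) ^ (z / 6) * 5 ^ (z % 6) ≡ 1 ^ (z / 6) * 5 ^ (z % 6) [MOD 72] :=
            Nat.ModEq.mul_right _ (Nat.ModEq.pow _ (by decide))
          _ = 5 ^ (z % 6) := by ring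
      have hfin : (5:ℕ) ^ (z % 6) ≡ 13 [MOD 72] := hz6.symm.trans h5
      have hr : z % 6 < 6 := Nat.mod_lt z (by norm_num)
      interval_cases h : z % 6 <;> revert hfin <;> decide
    -- decompose n = 2 ^ s * m with m odd
    obtain ⟨s, m, hm, hnm⟩ := Nat.exists_eq_pow_mul_and_not_dvd hn.ne' 2 (by norm_num)
    -- Step 3 : z is even
    have hzeven : Even z := by
      set E : ℤ := 2 ^ (2 * s + 3) with hEdef
      have hNm : (n:ℤ) = 2 ^ s * (m : ℤ) := by rw [hnm]; push_cast; ring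
      have hEB : E ∣ (4 * (n:ℤ)) ^ y := by
        have h1 : (4 * (n:ℤ)) = 2 ^ (s + 2) * (m : ℤ) := by rw [hNm, pow_add]; ring
        have h2 : (4 * (n:ℤ)) ^ y = 2 ^ ((s + 2) * y) * (m : ℤ) ^ y := by
          rw [h1, mul_pow, ← pow_mul]
        rw [h2, hEdef]
        exact (pow_dvd_pow 2 (by nlinarith : 2 * s + 3 ≤ (s + 2) * y)).mul_right _
      have hEA2 : E ∣ (4 * (n:ℤ) ^ 2 - 1) ^ 2 - 1 := by
        refine ⟨(m : ℤ) ^ 2 * (2 * (n:ℤ) ^ 2 - 1), ?_⟩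
        rw [hNm, hEdef]
        ring
      have hEA : E ∣ (4 * (n:ℤ) ^ 2 - 1) ^ x - 1 := by
        have h1 := sub_dvd_pow_sub_pow ((4 * (n:ℤ) ^ 2 - 1) ^ 2) 1 X
        rw [one_pow, ← pow_mul, ← hxX] at h1
        exact hEA2.trans h1
      have hEC : E ∣ (4 * (n:ℤ) ^ 2 + 1) ^ z - 1 := by
        have h1 : (4 * (n:ℤ) ^ 2 + 1) ^ z - 1
            = (4 * (n:ℤ)) ^ y + ((4 * (n:ℤ) ^ 2 - 1) ^ x - 1) := by
          rw [← heqZ]; ring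
        rw [h1]
        exact dvd_add hEB hEA
      rcases Nat.even_or_odd z with hze | hzo
      · exact hze
      · exfalso
        obtain ⟨k, hk⟩ := hzo
        have hC2 : (4 * (n:ℤ) ^ 2 + 1) ^ 2 ≡ 1 [ZMOD E] := by
          refine (Int.modEq_iff_dvd.mpr ?_).symm
          refine ⟨(m : ℤ) ^ 2 * (2 * (n:ℤ) ^ 2 + 1), ?_⟩
          rw [hNm, hEdef]
          ring
        have hCzC : (4 * (n:ℤ) ^ 2 + 1) ^ z ≡ (4 * (n:ℤ) ^ 2 + 1) [ZMOD E] := by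
          rw [hk]; exact sq_one_pow_odd hC2 k
        have hEC1 : E ∣ (4 * (n:ℤ) ^ 2 + 1) - 1 := by
          have h2 : E ∣ (4 * (n:ℤ) ^ 2 + 1) - (4 * (n:ℤ) ^ 2 + 1) ^ z := hCzC.dvd
          have h3 : (4 * (n:ℤ) ^ 2 + 1) - 1 = ((4 * (n:ℤ) ^ 2 + 1) ^ z - 1)
              + ((4 * (n:ℤ) ^ 2 + 1) - (4 * (n:ℤ) ^ 2 + 1) ^ z) := by ring
          rw [h3]
          exact dvd_add hEC h2
        have h4 : (2 : ℤ) ^ (2 * s + 2) * 2 ∣ 2 ^ (2 * s + 2) * (m : ℤ) ^ 2 := by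
          have h5 : (4 * (n:ℤ) ^ 2 + 1) - 1 = 2 ^ (2 * s + 2) * (m : ℤ) ^ 2 := by
            rw [hNm]; ring
          have h6 : E = 2 ^ (2 * s + 2) * 2 := by rw [hEdef]; ring
          rw [← h5, ← h6]
          exact hEC1
        have h7 : (2 : ℤ) ∣ (m : ℤ) ^ 2 :=
          (mul_dvd_mul_iff_left (by positivity : (2:ℤ) ^ (2 * s + 2) ≠ 0)).mp h4
        have h8 : (2 : ℕ) ∣ m ^ 2 := by exact_mod_cast h7
        exact hm (Nat.Prime.dvd_of_dvd_pow Nat.prime_two h8)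
    obtain ⟨Z, hZ'⟩ := hzeven
    have hzZ : z = 2 * Z := by omega
    have hZpos : 0 < Z := by omega
    -- Step 4 : factorization endgame
    clear heqZ
    set a := 4 * n ^ 2 - 1 with ha
    set c := 4 * n ^ 2 + 1 with hc
    set u := c ^ Z with hu
    set w := a ^ X with hw
    have ha3 : 3 ≤ a := by omega
    have hc5 : 5 ≤ c := by omega
    have hw3 : 3 ≤ w := le_trans ha3 (Nat.le_self_pow hXpos.ne' a)
    have hu5 : 5 ≤ u := le_trans hc5 (Nat.le_self_pow hZpos.ne' c)
    have heq2 : w ^ 2 + (4 * n) ^ y = u ^ 2 := by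
      rw [hu, hw, ← pow_mul, ← pow_mul, mul_comm X 2, mul_comm Z 2, ← hxX, ← hzZ]
      exact heq
    have hby : 0 < (4 * n) ^ y := pow_pos (by omega) y
    have hwu : w < u := by
      by_contra hcon
      have : u ^ 2 ≤ w ^ 2 := Nat.pow_le_pow_left (by omega) 2
      omega
    have heq2ZZ : ((w:ℤ)) ^ 2 + (4 * (n:ℤ)) ^ y = ((u:ℤ)) ^ 2 := by
      exact_mod_cast heq2
    have hfac : (u - w) * (u + w) = (4 * n) ^ y := by
      zify [hwu.le]
      linear_combination - heq2ZZ
    have haZ : ((a : ℕ) : ℤ) = 4 * (n : ℤ) ^ 2 - 1 := by rw [ha]; push_cast [h1n]; ring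
    have hcZ : ((c : ℕ) : ℤ) = 4 * (n : ℤ) ^ 2 + 1 := by rw [hc]; push_cast; ring
    have hMd : (4 * (n : ℤ)) ∣ 4 * (n : ℤ) ^ 2 := ⟨(n : ℤ), by ring⟩
    have huZ : (u : ℤ) ≡ 1 [ZMOD 4 * (n : ℤ)] := by
      rw [hu, Nat.cast_pow, hcZ]
      simpa using (modc hMd).pow Z
    rcases Nat.even_or_odd X with hXe | hXo
    · -- X even : contradiction
      exfalso
      obtain ⟨j, hj⟩ := hXe
      have hXj : X = 2 * j := by omega
      have hwZ : (w : ℤ) ≡ 1 [ZMOD 4 * (n : ℤ)] := by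
        rw [hw, hXj, Nat.cast_pow, haZ]
        exact sq_one_pow_even (moda2 hMd) j
      have hGmod : ((u + w : ℕ) : ℤ) ≡ 2 [ZMOD 4 * (n : ℤ)] := by
        rw [Nat.cast_add]
        simpa using huZ.add hwZ
      have hGdvd : (u + w) ∣ (4 * n) ^ y := Dvd.intro_left _ hfac
      have := factor_eq_two hn hGdvd hGmod
      omega
    · -- X odd
      obtain ⟨j, hj⟩ := hXo
      have hwZ : (w : ℤ) ≡ -1 [ZMOD 4 * (n : ℤ)] := by
        rw [hw, hj, Nat.cast_pow, haZ]
        exact (sq_one_pow_odd (moda2 hMd) j).trans (moda hMd)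
      have hGmod : ((u - w : ℕ) : ℤ) ≡ 2 [ZMOD 4 * (n : ℤ)] := by
        rw [Nat.cast_sub hwu.le]
        have := huZ.sub hwZ
        simpa using this
      have hGdvd : (u - w) ∣ (4 * n) ^ y := Dvd.intro _ hfac
      have huw2 : u - w = 2 := factor_eq_two hn hGdvd hGmod
      have hu2 : u = w + 2 := by omega
      have h4w : 4 * (w + 1) = (4 * n) ^ y := by
        have e1 : (w + 2) - w = 2 := by omega
        rw [hu2, e1] at hfac
        omega
      have hsplit : (4 * n) ^ y = 4 * (4 * n ^ 2 * (4 * n) ^ (y - 2)) := by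
        have : (4 * n) ^ y = (4 * n) ^ 2 * (4 * n) ^ (y - 2) := by
          rw [← pow_add]
          congr 1
          omega
        rw [this]
        ring
      have hw1 : w + 1 = 4 * n ^ 2 * (4 * n) ^ (y - 2) := by
        apply Nat.eq_of_mul_eq_mul_left (show 0 < 4 by norm_num)
        rw [h4w, hsplit]
      rcases Nat.lt_or_ge y 3 with hy3 | hy3
      · -- y = 2
        have hy' : y = 2 := by omega
        subst hy'
        simp only [Nat.sub_self, pow_zero, mul_one] at hw1
        have hwa : w = a := by omega
        have hXone : X = 1 := by
          apply Nat.pow_right_injective (show 2 ≤ a by omega)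
          show a ^ X = a ^ 1
          rw [pow_one, ← hw, hwa]
        have huc : u = c := by omega
        have hZone : Z = 1 := by
          apply Nat.pow_right_injective (show 2 ≤ c by omega)
          show c ^ Z = c ^ 1
          rw [pow_one, ← hu, huc]
        exact ⟨by omega, rfl, by omega⟩
      · -- y ≥ 3 : contradiction via 2-adic valuation
        exfalso
        have hEdvd : (2 : ℕ) ^ (2 * s + 3) ∣ w + 1 := by
          rw [hw1, pow_succ]
          apply mul_dvd_mul
          · refine ⟨m ^ 2, ?_⟩
            rw [hnm]
            ring
          · exact dvd_pow ⟨2 * n, by ring⟩ (by omega : y - 2 ≠ 0)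
        set E : ℤ := 2 ^ (2 * s + 3) with hEdef
        have hNm : (n : ℤ) = 2 ^ s * (m : ℤ) := by rw [hnm]; push_cast; ring
        have hA2E : (4 * (n : ℤ) ^ 2 - 1) ^ 2 ≡ 1 [ZMOD E] := by
          refine (Int.modEq_iff_dvd.mpr ?_).symm
          refine ⟨(m : ℤ) ^ 2 * (2 * (n : ℤ) ^ 2 - 1), ?_⟩
          rw [hNm, hEdef]
          ring
        have hwA : (w : ℤ) ≡ 4 * (n : ℤ) ^ 2 - 1 [ZMOD E] := by
          rw [hw, hj, Nat.cast_pow, haZ]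
          exact sq_one_pow_odd hA2E j
        have hEw : E ∣ (w : ℤ) + 1 := by
          have h2 : ((2:ℕ) : ℤ) ^ (2 * s + 3) ∣ ((w + 1 : ℕ) : ℤ) := by
            exact_mod_cast Int.natCast_dvd_natCast.mpr hEdvd
          push_cast at h2
          simpa [hEdef] using h2
        have hEm : E ∣ 2 ^ (2 * s + 2) * (m : ℤ) ^ 2 := by
          have h1 : E ∣ (4 * (n : ℤ) ^ 2 - 1) + 1 - ((w : ℤ) + 1) := by
            have hd := hwA.dvd
            have e : (4 * (n : ℤ) ^ 2 - 1) + 1 - ((w : ℤ) + 1)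
                = (4 * (n : ℤ) ^ 2 - 1) - (w : ℤ) := by ring
            rw [e]
            exact hd
          have h2 : (2:ℤ) ^ (2 * s + 2) * (m : ℤ) ^ 2
              = ((4 * (n : ℤ) ^ 2 - 1) + 1 - ((w : ℤ) + 1)) + ((w : ℤ) + 1) := by
            rw [hNm]; ring
          rw [h2]
          exact dvd_add h1 hEw
        have h7 : (2 : ℤ) ∣ (m : ℤ) ^ 2 := by
          have h6 : E = 2 ^ (2 * s + 2) * 2 := by rw [hEdef]; ring
          rw [h6] at hEm
          exact (mul_dvd_mul_iff_left (by positivity : (2:ℤ) ^ (2 * s + 2) ≠ 0)).mp hEm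
        have h8 : (2 : ℕ) ∣ m ^ 2 := by exact_mod_cast h7
        exact hm (Nat.Prime.dvd_of_dvd_pow Nat.prime_two h8)
  · rintro ⟨rfl, rfl, rfl⟩
    zify [h1n]
    ring
end

section
/- Let U, V, W be positive integers (not necessarily relatively prime) such that U² + V² = W². If positive integers x, y, z satisfy U^x + V^y = W^z and z ≥ max{x, y}, then (x, y, z) = (2, 2, 2). -/
theorem deng_cohen_lemma (U V W : ℕ) (hU : 0 < U) (hV : 0 < V) (hW : 0 < W)
    (hPyth : U ^ 2 + V ^ 2 = W ^ 2)
    (x y z : ℕ) (hx : 0 < x) (hy : 0 < y) (hz : 0 < z)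
    (heq : U ^ x + V ^ y = W ^ z) (hge : max x y ≤ z) :
    x = 2 ∧ y = 2 ∧ z = 2 := by
  have hUW : U < W := by nlinarith [sq_nonneg U, sq_nonneg V, sq_nonneg W]
  have hVW : V < W := by nlinarith
  -- U, V ≥ 2
  have hU2 : 2 ≤ U := by
    by_contra h
    interval_cases U <;> nlinarith
  have hV2 : 2 ≤ V := by
    by_contra h
    interval_cases V <;> nlinarith
  have hxz : x ≤ z := le_trans (le_max_left x y) hge
  have hyz : y ≤ z := le_trans (le_max_right x y) hge
  -- z ≤ 2
  have hz2 : z ≤ 2 := by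
    by_contra h
    push_neg at h
    obtain ⟨k, hk⟩ : ∃ k, z = k + 3 := ⟨z - 3, by omega⟩
    have h1 : U ^ x ≤ U ^ z := Nat.pow_le_pow_right hU hxz
    have h2 : V ^ y ≤ V ^ z := Nat.pow_le_pow_right hV hyz
    have hUk : U ^ (k+1) < W ^ (k+1) := Nat.pow_lt_pow_left hUW (by omega)
    have hVk : V ^ (k+1) < W ^ (k+1) := Nat.pow_lt_pow_left hVW (by omega)
    have : U ^ z + V ^ z < W ^ z := by
      subst hk
      have e1 : U ^ (k+3) = U ^ (k+1) * U ^ 2 := by ring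
      have e2 : V ^ (k+3) = V ^ (k+1) * V ^ 2 := by ring
      have e3 : W ^ (k+3) = W ^ (k+1) * W ^ 2 := by ring
      rw [e1, e2, e3, ← hPyth]
      have hU2pos : 0 < U ^ 2 := by positivity
      have hV2pos : 0 < V ^ 2 := by positivity
      nlinarith
    omega
  interval_cases z
  · -- z = 1
    interval_cases x
    interval_cases y
    simp only [pow_one] at heq
    nlinarith
  · -- z = 2
    interval_cases x <;> interval_cases y <;> [skip; skip; skip; skip] <;>
      simp_all <;> nlinarith
end

section
/- Let p > q ≥ 1 be coprime integers of opposite parity, set U = p²−q², V = 2pq, W = p²+q², and let k be a positive integer. If positive integers (x, y, z) satisfy (kU)^x + (kV)^y = (kW)^z and (x, y, z) ≠ (2, 2, 2), then x, y, z are pairwise distinct. -/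
/- ## Auxiliary arithmetic lemmas -/

private lemma aux_three_pow : ∀ n : ℕ, 1 ≤ n → n + 1 < 3 ^ n := by
  intro n
  induction n with
  | zero => omega
  | succ m ih =>
    intro _
    rcases Nat.eq_zero_or_pos m with hm | hm
    · subst hm; norm_num
    · have h1 := ih hm
      have h2 : 3 ^ (m + 1) = 3 * 3 ^ m := by rw [pow_succ]; ring
      omega

private lemma aux_gap3 {n : ℕ} (h : 3 ≤ n) : n - 1 < 3 ^ (n - 2) := by
  have := aux_three_pow (n - 2) (by omega)
  omega

private lemma aux_gap4 {n : ℕ} (h : 3 ≤ n) : n - 1 < 4 ^ (n - 2) := by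
  have h1 := aux_gap3 h
  have h2 : (3 : ℕ) ^ (n - 2) ≤ 4 ^ (n - 2) := Nat.pow_le_pow_left (by norm_num) _
  omega

private lemma aux_four_pow : ∀ m : ℕ, 2 ≤ m → 4 ^ m < 25 ^ (m - 1) := by
  intro m
  induction m with
  | zero => omega
  | succ n ih =>
    intro hn
    rcases Nat.lt_or_ge n 2 with h | h
    · interval_cases n
      · omega
      · norm_num
    · have h1 := ih h
      have h2 : 25 ^ (n + 1 - 1) = 25 * 25 ^ (n - 1) := by
        rw [show n + 1 - 1 = (n - 1) + 1 by omega, pow_succ]; ring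
      have h3 : 4 ^ (n + 1) = 4 * 4 ^ n := by rw [pow_succ]; ring
      omega

private lemma aux_add_pow_le (a b m : ℕ) : (a + b) ^ m ≤ 2 ^ m * (a ^ m + b ^ m) := by
  rcases le_total a b with h | h
  · calc (a + b) ^ m ≤ (2 * b) ^ m := Nat.pow_le_pow_left (by omega) m
      _ = 2 ^ m * b ^ m := mul_pow 2 b m
      _ ≤ 2 ^ m * (a ^ m + b ^ m) := Nat.mul_le_mul_left _ (by omega)
  · calc (a + b) ^ m ≤ (2 * a) ^ m := Nat.pow_le_pow_left (by omega) m
      _ = 2 ^ m * a ^ m := mul_pow 2 a m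
      _ ≤ 2 ^ m * (a ^ m + b ^ m) := Nat.mul_le_mul_left _ (by omega)

private lemma aux_not_dvd_of_coprime {a b r : ℕ} (h : Nat.Coprime a b) (hr : 1 < r)
    (hra : r ∣ a) : ¬ r ∣ b := by
  intro hrb
  have h1 : r ∣ Nat.gcd a b := Nat.dvd_gcd hra hrb
  rw [h] at h1
  have := Nat.le_of_dvd one_pos h1
  omega

private lemma aux_pv_le_of_dvd {p a b : ℕ} [Fact p.Prime] (h : a ∣ b) (hb : b ≠ 0) :
    padicValNat p a ≤ padicValNat p b := by
  obtain ⟨c, rfl⟩ := h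
  have ha : a ≠ 0 := by rintro rfl; simp at hb
  have hc : c ≠ 0 := by rintro rfl; simp at hb
  rw [padicValNat.mul ha hc]
  omega

/- ## Case x = y : conclude x = 2 ∧ z = 2 -/

private lemma caseXY (U V W k x z : ℕ) (hk : 0 < k) (hx : 0 < x) (hz : 0 < z)
    (hUVW : U ^ 2 + V ^ 2 = W ^ 2)
    (hU3 : 3 ≤ U) (hV4 : 4 ≤ V) (hW5 : 5 ≤ W)
    (hUW : U < W) (hVW : V < W) (hWUV : W < U + V)
    (hcUW : Nat.Coprime U W) (hcVW : Nat.Coprime V W)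
    (hWodd : ¬ 2 ∣ W)
    (heq : k ^ x * U ^ x + k ^ x * V ^ x = k ^ z * W ^ z) :
    x = 2 ∧ z = 2 := by
  have hU0 : 0 < U := by omega
  have hW0 : 0 < W := by omega
  rcases lt_trichotomy z x with hzx | hzx | hzx
  · -- z < x : impossible
    exfalso
    have E : k ^ (x - z) * (U ^ x + V ^ x) = W ^ z := by
      apply Nat.eq_of_mul_eq_mul_left (pow_pos hk z)
      calc k ^ z * (k ^ (x - z) * (U ^ x + V ^ x))
          = k ^ (z + (x - z)) * (U ^ x + V ^ x) := by rw [← mul_assoc, ← pow_add]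
        _ = k ^ x * U ^ x + k ^ x * V ^ x := by rw [show z + (x - z) = x by omega]; ring
        _ = k ^ z * W ^ z := heq
    have hd5 : 5 ≤ U ^ x + V ^ x := by
      have h1 : 1 ≤ U ^ x := Nat.one_le_pow _ _ hU0
      have h2 : V ≤ V ^ x := Nat.le_self_pow hx.ne' V
      omega
    have hdW : U ^ x + V ^ x ∣ W ^ z := Dvd.intro_left _ E
    have hx2 : 2 ≤ x := by omega
    -- find a prime r ∣ U^x + V^x and deduce 4 ∣ x - 2
    have h42 : 4 ∣ x - 2 := by
      set r := (U ^ x + V ^ x).minFac with hrdef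
      have hr : r.Prime := Nat.minFac_prime (by omega)
      have hrd : r ∣ U ^ x + V ^ x := Nat.minFac_dvd _
      have hrW : r ∣ W := hr.dvd_of_dvd_pow (hrd.trans hdW)
      have hrU : ¬ r ∣ U := fun h => aux_not_dvd_of_coprime hcUW hr.one_lt h hrW
      have hrV : ¬ r ∣ V := fun h => aux_not_dvd_of_coprime hcVW hr.one_lt h hrW
      have hr2 : r ≠ 2 := fun h => hWodd (h ▸ hrW)
      haveI : Fact r.Prime := ⟨hr⟩
      haveI : Fact (2 < r) := ⟨by have := hr.two_le; omega⟩
      have hb0 : (V : ZMod r) ≠ 0 := by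
        rw [Ne, ZMod.natCast_eq_zero_iff]; exact hrV
      have hWz : (W : ZMod r) = 0 := (ZMod.natCast_eq_zero_iff _ _).mpr hrW
      have h1 : (U : ZMod r) ^ 2 + (V : ZMod r) ^ 2 = 0 := by
        have h := congrArg (fun n : ℕ => (n : ZMod r)) hUVW
        push_cast at h
        rw [hWz] at h
        simpa using h
      have h2 : (U : ZMod r) ^ x + (V : ZMod r) ^ x = 0 := by
        have h : ((U ^ x + V ^ x : ℕ) : ZMod r) = 0 :=
          (ZMod.natCast_eq_zero_iff _ _).mpr hrd
        push_cast at h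
        exact h
      set u : ZMod r := (U : ZMod r) * (V : ZMod r)⁻¹ with hu
      have hu2 : u ^ 2 = -1 := by
        rw [hu, mul_pow, inv_pow, eq_neg_of_add_eq_zero_left h1, neg_mul,
          mul_inv_cancel₀ (pow_ne_zero 2 hb0)]
      have hux : u ^ x = -1 := by
        rw [hu, mul_pow, inv_pow, eq_neg_of_add_eq_zero_left h2, neg_mul,
          mul_inv_cancel₀ (pow_ne_zero x hb0)]
      have hu4 : u ^ 4 = 1 := by
        have h4 : u ^ 4 = (u ^ 2) ^ 2 := by ring
        rw [h4, hu2]; ring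
      have hne : u ^ 2 ≠ 1 := by rw [hu2]; exact ZMod.neg_one_ne_one
      have h14 : orderOf u ∣ 4 := orderOf_dvd_of_pow_eq_one hu4
      have h12 : ¬ orderOf u ∣ 2 := fun h => hne (orderOf_dvd_iff_pow_eq_one.mp h)
      have ho : orderOf u = 4 := by
        have h4 := Nat.le_of_dvd (by norm_num) h14
        interval_cases h : orderOf u <;> revert h14 h12 <;> decide
      have hux2 : u ^ (x - 2) = 1 := by
        have hpow : u ^ (x - 2) * u ^ 2 = u ^ x := by
          rw [← pow_add]; congr 1; omega
        rw [hu2, hux, mul_neg_one] at hpow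
        exact neg_injective hpow
      exact ho ▸ orderOf_dvd_of_pow_eq_one hux2
    obtain ⟨m, hm, hmodd⟩ : ∃ m, x = 2 * m ∧ Odd m := by
      obtain ⟨j, hj⟩ := h42
      exact ⟨2 * j + 1, by omega, ⟨j, by ring⟩⟩
    rcases eq_or_ne m 1 with hm1 | hm1
    · -- x = 2, z = 1 : k * W^2 = W, impossible
      have hx2' : x = 2 := by omega
      have hz1 : z = 1 := by omega
      rw [hx2', hz1, hUVW] at E
      norm_num at E
      have h1 : W ^ 2 ≤ k * W ^ 2 := Nat.le_mul_of_pos_left _ hk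
      have h2 : W < W ^ 2 := by nlinarith [hW5]
      omega
    · -- m ≥ 3 : divisibility/size contradiction
      have hm3 : 3 ≤ m := by rcases hmodd with ⟨j, hj⟩; omega
      have hdeq : U ^ x + V ^ x = (U ^ 2) ^ m + (V ^ 2) ^ m := by
        rw [hm, pow_mul, pow_mul]
      have hW2d : W ^ 2 ∣ U ^ x + V ^ x := by
        rw [hdeq, ← hUVW]
        exact Odd.nat_add_dvd_pow_add_pow (U ^ 2) (V ^ 2) hmodd
      obtain ⟨S, hS⟩ := hW2d
      have hd0 : U ^ x + V ^ x ≠ 0 := by positivity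
      have hS0 : S ≠ 0 := by rintro rfl; rw [mul_zero] at hS; exact hd0 hS
      have hm0 : m ≠ 0 := by omega
      have hSd : S ∣ U ^ x + V ^ x := hS ▸ dvd_mul_left S (W ^ 2)
      have hSm : S ∣ m := by
        rw [← Nat.factorization_le_iff_dvd hS0 hm0]
        refine Finsupp.le_def.mpr fun r => ?_
        by_cases hrp : r.Prime
        · rw [Nat.factorization_def _ hrp, Nat.factorization_def _ hrp]
          by_cases hrW : r ∣ W
          · haveI : Fact r.Prime := ⟨hrp⟩
            have hr2 : r ≠ 2 := fun h => hWodd (h ▸ hrW)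
            have hrU : ¬ r ∣ U := fun h => aux_not_dvd_of_coprime hcUW hrp.one_lt h hrW
            have hLTE : padicValNat r ((U ^ 2) ^ m + (V ^ 2) ^ m)
                = padicValNat r (U ^ 2 + V ^ 2) + padicValNat r m :=
              padicValNat.pow_add_pow (hrp.odd_of_ne_two hr2)
                (by rw [hUVW]; exact dvd_pow hrW two_ne_zero)
                (fun h => hrU (hrp.dvd_of_dvd_pow h)) hmodd
            have e1 : padicValNat r (W ^ 2 * S)
                = padicValNat r (W ^ 2) + padicValNat r S :=
              padicValNat.mul (by positivity) hS0
            rw [← hS, hdeq, hLTE, hUVW] at e1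
            omega
          · have hrS : ¬ r ∣ S := by
              intro h
              exact hrW (hrp.dvd_of_dvd_pow ((h.trans hSd).trans hdW))
            simp [padicValNat.eq_zero_of_not_dvd hrS]
        · simp [Nat.factorization_eq_zero_of_not_prime _ hrp]
      have hSm' : S ≤ m := Nat.le_of_dvd (by omega) hSm
      have hub : U ^ x + V ^ x ≤ W ^ 2 * m := by
        rw [hS]; exact Nat.mul_le_mul_left _ hSm'
      have hlb : W ^ (2 * m) ≤ 2 ^ m * (U ^ x + V ^ x) := by
        calc W ^ (2 * m) = (U ^ 2 + V ^ 2) ^ m := by rw [hUVW, ← pow_mul]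
          _ ≤ 2 ^ m * ((U ^ 2) ^ m + (V ^ 2) ^ m) := aux_add_pow_le _ _ m
          _ = 2 ^ m * (U ^ x + V ^ x) := by rw [← hdeq]
      have hkey : 2 ^ m * m < W ^ (2 * (m - 1)) := by
        have h4m : (4 : ℕ) ^ m = 2 ^ m * 2 ^ m := by
          rw [show (4 : ℕ) = 2 * 2 from rfl, mul_pow]
        have hm2 : m < 2 ^ m := (Nat.lt_two_pow_self (n := m))
        calc 2 ^ m * m < 2 ^ m * 2 ^ m :=
              mul_lt_mul_of_pos_left hm2 (pow_pos two_pos m)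
          _ = 4 ^ m := h4m.symm
          _ < 25 ^ (m - 1) := aux_four_pow m (by omega)
          _ ≤ (W ^ 2) ^ (m - 1) := by
              refine Nat.pow_le_pow_left ?_ _
              calc (25 : ℕ) = 5 ^ 2 := by norm_num
                _ ≤ W ^ 2 := Nat.pow_le_pow_left hW5 2
          _ = W ^ (2 * (m - 1)) := by rw [← pow_mul]
      have hfin : W ^ (2 * m) < W ^ (2 * m) := by
        calc W ^ (2 * m) ≤ 2 ^ m * (U ^ x + V ^ x) := hlb
          _ ≤ 2 ^ m * (W ^ 2 * m) := Nat.mul_le_mul_left _ hub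
          _ = W ^ 2 * (2 ^ m * m) := by ring
          _ < W ^ 2 * W ^ (2 * (m - 1)) :=
              mul_lt_mul_of_pos_left hkey (by positivity)
          _ = W ^ (2 * m) := by rw [← pow_add]; congr 1; omega
      omega
  · -- z = x
    rw [hzx] at heq
    have E : U ^ x + V ^ x = W ^ x := by
      apply Nat.eq_of_mul_eq_mul_left (pow_pos hk x)
      rw [mul_add]; exact heq
    suffices hx2 : x = 2 by exact ⟨hx2, by omega⟩
    rcases Nat.lt_or_ge x 3 with h3 | h3
    · interval_cases x
      · exfalso; simp only [pow_one] at E; omega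
      · rfl
    · exfalso
      have h1 : U ^ x < U ^ 2 * W ^ (x - 2) := by
        have e : U ^ x = U ^ 2 * U ^ (x - 2) := by rw [← pow_add]; congr 1; omega
        rw [e]
        exact mul_lt_mul_of_pos_left (Nat.pow_lt_pow_left hUW (by omega)) (by positivity)
      have h2 : V ^ x < V ^ 2 * W ^ (x - 2) := by
        have e : V ^ x = V ^ 2 * V ^ (x - 2) := by rw [← pow_add]; congr 1; omega
        rw [e]
        exact mul_lt_mul_of_pos_left (Nat.pow_lt_pow_left hVW (by omega)) (by positivity)
      have h3' : U ^ 2 * W ^ (x - 2) + V ^ 2 * W ^ (x - 2) = W ^ x := by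
        rw [← add_mul, hUVW, ← pow_add]; congr 1; omega
      omega
  · -- z > x : impossible
    exfalso
    have E : U ^ x + V ^ x = k ^ (z - x) * W ^ z := by
      apply Nat.eq_of_mul_eq_mul_left (pow_pos hk x)
      calc k ^ x * (U ^ x + V ^ x) = k ^ x * U ^ x + k ^ x * V ^ x := by ring
        _ = k ^ z * W ^ z := heq
        _ = k ^ x * (k ^ (z - x) * W ^ z) := by
            rw [← mul_assoc, ← pow_add, show x + (z - x) = z by omega]
    have h1 : U ^ x < W ^ x := Nat.pow_lt_pow_left hUW hx.ne'
    have h2 : V ^ x < W ^ x := Nat.pow_lt_pow_left hVW hx.ne'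
    have h3 : 2 * W ^ x ≤ W ^ (x + 1) := by
      rw [pow_succ]
      have : 0 < W ^ x := pow_pos hW0 x
      nlinarith
    have h4 : W ^ (x + 1) ≤ k ^ (z - x) * W ^ z := by
      calc W ^ (x + 1) ≤ W ^ z := Nat.pow_le_pow_right (by omega) (by omega)
        _ ≤ k ^ (z - x) * W ^ z := Nat.le_mul_of_pos_left _ (pow_pos hk _)
    omega

/- ## Case y = z : conclude x = z -/

private lemma caseYZ (U V W k x z : ℕ) (hk : 0 < k) (hx : 0 < x) (hz : 0 < z)
    (hUVW : U ^ 2 + V ^ 2 = W ^ 2)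
    (hU3 : 3 ≤ U) (hW5 : 5 ≤ W) (hUW : U < W) (hVW : V < W)
    (hcUV : Nat.Coprime U V) (hcUW : Nat.Coprime U W)
    (hUodd : ¬ 2 ∣ U)
    (hs : ∃ s, s.Prime ∧ s ∣ U ∧ ¬ s ∣ (W - V))
    (heq : k ^ x * U ^ x + k ^ z * V ^ z = k ^ z * W ^ z) :
    x = z := by
  have hU0ne : U ≠ 0 := by omega
  by_contra hxz
  rcases lt_or_gt_of_ne hxz with h | h
  · -- x < z : size contradiction
    have E : U ^ x + k ^ (z - x) * V ^ z = k ^ (z - x) * W ^ z := by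
      apply Nat.eq_of_mul_eq_mul_left (pow_pos hk x)
      calc k ^ x * (U ^ x + k ^ (z - x) * V ^ z)
          = k ^ x * U ^ x + k ^ (x + (z - x)) * V ^ z := by rw [mul_add, ← mul_assoc, ← pow_add]
        _ = k ^ x * U ^ x + k ^ z * V ^ z := by rw [show x + (z - x) = z by omega]
        _ = k ^ z * W ^ z := heq
        _ = k ^ x * (k ^ (z - x) * W ^ z) := by
            rw [← mul_assoc, ← pow_add, show x + (z - x) = z by omega]
    have hc1 : 1 ≤ k ^ (z - x) := Nat.one_le_pow _ _ hk
    have hVzW : V ^ z + W ^ (z - 1) ≤ W ^ z := by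
      have e1 : V ^ z ≤ V * W ^ (z - 1) := by
        calc V ^ z = V * V ^ (z - 1) := by rw [← pow_succ']; congr 1; omega
          _ ≤ V * W ^ (z - 1) := Nat.mul_le_mul_left _ (Nat.pow_le_pow_left hVW.le _)
      have e2 : (V + 1) * W ^ (z - 1) ≤ W ^ z := by
        calc (V + 1) * W ^ (z - 1) ≤ W * W ^ (z - 1) := Nat.mul_le_mul_right _ (by omega)
          _ = W ^ z := by rw [← pow_succ']; congr 1; omega
      nlinarith
    have hUxW : U ^ x < W ^ (z - 1) := by
      calc U ^ x < W ^ x := Nat.pow_lt_pow_left hUW hx.ne'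
        _ ≤ W ^ (z - 1) := Nat.pow_le_pow_right (by omega) (by omega)
    have hBig : k ^ (z - x) * V ^ z + k ^ (z - x) * W ^ (z - 1) ≤ k ^ (z - x) * W ^ z := by
      have h0 := Nat.mul_le_mul_left (k ^ (z - x)) hVzW
      rw [mul_add] at h0
      exact h0
    have hW1' : W ^ (z - 1) ≤ k ^ (z - x) * W ^ (z - 1) :=
      Nat.le_mul_of_pos_left _ (pow_pos hk _)
    omega
  · -- x > z
    have E : k ^ (x - z) * U ^ x + V ^ z = W ^ z := by
      apply Nat.eq_of_mul_eq_mul_left (pow_pos hk z)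
      calc k ^ z * (k ^ (x - z) * U ^ x + V ^ z)
          = k ^ (z + (x - z)) * U ^ x + k ^ z * V ^ z := by rw [mul_add, ← mul_assoc, ← pow_add]
        _ = k ^ x * U ^ x + k ^ z * V ^ z := by rw [show z + (x - z) = x by omega]
        _ = k ^ z * W ^ z := heq
    have hD : W ^ z - V ^ z = k ^ (x - z) * U ^ x :=
      Nat.sub_eq_of_eq_add (by linarith [E])
    rcases Nat.even_or_odd z with hze | hzo
    · -- z even : valuation at a prime of U
      obtain ⟨t, ht⟩ := hze
      have hzt : z = 2 * t := by omega
      have ht0 : t ≠ 0 := by omega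
      have hz2 : 2 ≤ z := by omega
      have hx3 : 3 ≤ x := by omega
      set r := U.minFac with hrdef
      have hr : r.Prime := Nat.minFac_prime (by omega)
      have hrU : r ∣ U := Nat.minFac_dvd U
      have hr2 : r ≠ 2 := fun hh => hUodd (hh ▸ hrU)
      have hr3 : 3 ≤ r := by have := hr.two_le; omega
      have hrW : ¬ r ∣ W := aux_not_dvd_of_coprime hcUW hr.one_lt hrU
      haveI : Fact r.Prime := ⟨hr⟩
      have hVW2 : V ^ 2 < W ^ 2 := Nat.pow_lt_pow_left hVW two_ne_zero
      have hU2eq : W ^ 2 - V ^ 2 = U ^ 2 := by omega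
      have hLTE : padicValNat r ((W ^ 2) ^ t - (V ^ 2) ^ t)
          = padicValNat r (W ^ 2 - V ^ 2) + padicValNat r t :=
        padicValNat.pow_sub_pow (hr.odd_of_ne_two hr2) hVW2
          (by rw [hU2eq]; exact dvd_pow hrU two_ne_zero)
          (fun hh => hrW (hr.dvd_of_dvd_pow hh)) ht0
      have hrw : (W ^ 2) ^ t - (V ^ 2) ^ t = W ^ z - V ^ z := by
        rw [← pow_mul, ← pow_mul, ← hzt]
      rw [hrw, hU2eq, hD] at hLTE
      have hk0 : k ^ (x - z) ≠ 0 := by positivity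
      have hUx0 : U ^ x ≠ 0 := by positivity
      rw [padicValNat.mul hk0 hUx0, padicValNat.pow U x,
        padicValNat.pow U 2] at hLTE
      have hvU1 : 1 ≤ padicValNat r U := by
        have := (padicValNat_dvd_iff_le hU0ne (n := 1)).mp (by simpa using hrU)
        omega
      have hvt_le : padicValNat r t ≤ padicValNat r z := by
        rw [hzt, padicValNat.mul two_ne_zero ht0]
        omega
      have hstep : (x - 2) * padicValNat r U ≤ padicValNat r t := by
        have e : x * padicValNat r U = (x - 2) * padicValNat r U + 2 * padicValNat r U := by
          rw [← add_mul]; congr 1; omega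
        omega
      have hx2le : x - 2 ≤ padicValNat r z := by
        have := Nat.le_mul_of_pos_right (x - 2) (show 0 < padicValNat r U by omega)
        omega
      have hdvd : r ^ (x - 2) ∣ z := (padicValNat_dvd_iff_le hz.ne').mpr hx2le
      have hzge : 3 ^ (x - 2) ≤ z := by
        calc (3 : ℕ) ^ (x - 2) ≤ r ^ (x - 2) := Nat.pow_le_pow_left hr3 _
          _ ≤ z := Nat.le_of_dvd hz hdvd
      have := aux_gap3 hx3
      omega
    · -- z odd : prime s of U dividing W + V
      obtain ⟨s, hsp, hsU, hsWV⟩ := hs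
      have hs2 : s ≠ 2 := fun hh => hUodd (hh ▸ hsU)
      have hsD : s ∣ W ^ z - V ^ z := by
        rw [hD]
        exact Dvd.dvd.mul_left (hsU.trans (dvd_pow_self U hx.ne')) _
      have hsU2 : s ∣ (W + V) * (W - V) := by
        have e : (W + V) * (W - V) = U ^ 2 := by rw [← Nat.sq_sub_sq]; omega
        rw [e]
        exact hsU.trans (dvd_pow_self U two_ne_zero)
      have hsWV' : s ∣ W + V := (hsp.dvd_mul.mp hsU2).resolve_right hsWV
      have hsum : s ∣ W ^ z + V ^ z :=
        hsWV'.trans (Odd.nat_add_dvd_pow_add_pow W V hzo)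
      have hle : V ^ z ≤ W ^ z := Nat.pow_le_pow_left hVW.le _
      have h2V : s ∣ 2 * V ^ z := by
        have e : (W ^ z + V ^ z) - (W ^ z - V ^ z) = 2 * V ^ z := by omega
        exact e ▸ Nat.dvd_sub hsum hsD
      have hsV : s ∣ V := by
        rcases hsp.dvd_mul.mp h2V with h' | h'
        · exact absurd ((Nat.prime_dvd_prime_iff_eq hsp Nat.prime_two).mp h') hs2
        · exact hsp.dvd_of_dvd_pow h'
      exact absurd hsV (aux_not_dvd_of_coprime hcUV hsp.one_lt hsU)

/- ## Case x = z : conclude y = z -/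

private lemma caseXZ (U V W k y z : ℕ) (hk : 0 < k) (hy : 0 < y) (hz : 0 < z)
    (hUVW : U ^ 2 + V ^ 2 = W ^ 2)
    (hU3 : 3 ≤ U) (hV4 : 4 ≤ V) (hW5 : 5 ≤ W) (hUW : U < W) (hVW : V < W)
    (hUodd : ¬ 2 ∣ U) (hWodd : ¬ 2 ∣ W)
    (hv2V : 2 ≤ padicValNat 2 V)
    (hWU : padicValNat 2 (W - U) < 2 * padicValNat 2 V)
    (heq : k ^ z * U ^ z + k ^ y * V ^ y = k ^ z * W ^ z) :
    y = z := by
  have hV0ne : V ≠ 0 := by omega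
  have hk0ne : k ≠ 0 := by omega
  by_contra hyz
  rcases lt_or_gt_of_ne hyz with h | h
  · -- y < z : size contradiction
    have E : k ^ (z - y) * U ^ z + V ^ y = k ^ (z - y) * W ^ z := by
      apply Nat.eq_of_mul_eq_mul_left (pow_pos hk y)
      calc k ^ y * (k ^ (z - y) * U ^ z + V ^ y)
          = k ^ (y + (z - y)) * U ^ z + k ^ y * V ^ y := by rw [mul_add, ← mul_assoc, ← pow_add]
        _ = k ^ z * U ^ z + k ^ y * V ^ y := by rw [show y + (z - y) = z by omega]
        _ = k ^ z * W ^ z := heq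
        _ = k ^ y * (k ^ (z - y) * W ^ z) := by
            rw [← mul_assoc, ← pow_add, show y + (z - y) = z by omega]
    have hc1 : 1 ≤ k ^ (z - y) := Nat.one_le_pow _ _ hk
    have hUzW : U ^ z + W ^ (z - 1) ≤ W ^ z := by
      have e1 : U ^ z ≤ U * W ^ (z - 1) := by
        calc U ^ z = U * U ^ (z - 1) := by rw [← pow_succ']; congr 1; omega
          _ ≤ U * W ^ (z - 1) := Nat.mul_le_mul_left _ (Nat.pow_le_pow_left hUW.le _)
      have e2 : (U + 1) * W ^ (z - 1) ≤ W ^ z := by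
        calc (U + 1) * W ^ (z - 1) ≤ W * W ^ (z - 1) := Nat.mul_le_mul_right _ (by omega)
          _ = W ^ z := by rw [← pow_succ']; congr 1; omega
      nlinarith
    have hVyW : V ^ y < W ^ (z - 1) := by
      calc V ^ y < W ^ y := Nat.pow_lt_pow_left hVW hy.ne'
        _ ≤ W ^ (z - 1) := Nat.pow_le_pow_right (by omega) (by omega)
    have hBig : k ^ (z - y) * U ^ z + k ^ (z - y) * W ^ (z - 1) ≤ k ^ (z - y) * W ^ z := by
      have h0 := Nat.mul_le_mul_left (k ^ (z - y)) hUzW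
      rw [mul_add] at h0
      exact h0
    have hW1' : W ^ (z - 1) ≤ k ^ (z - y) * W ^ (z - 1) :=
      Nat.le_mul_of_pos_left _ (pow_pos hk _)
    omega
  · -- y > z
    have E : U ^ z + k ^ (y - z) * V ^ y = W ^ z := by
      apply Nat.eq_of_mul_eq_mul_left (pow_pos hk z)
      calc k ^ z * (U ^ z + k ^ (y - z) * V ^ y)
          = k ^ z * U ^ z + k ^ (z + (y - z)) * V ^ y := by rw [mul_add, ← mul_assoc, ← pow_add]
        _ = k ^ z * U ^ z + k ^ y * V ^ y := by rw [show z + (y - z) = y by omega]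
        _ = k ^ z * W ^ z := heq
    have hD : W ^ z - U ^ z = k ^ (y - z) * V ^ y :=
      Nat.sub_eq_of_eq_add (by linarith [E])
    have hUzWz : U ^ z < W ^ z := Nat.pow_lt_pow_left hUW hz.ne'
    have hD0 : W ^ z - U ^ z ≠ 0 := by omega
    have hUm2 : U % 2 = 1 := Nat.odd_iff.mp (Nat.odd_iff.mpr (by omega))
    have hWUdvd : 2 ∣ W - U := by omega
    have hvD : padicValNat 2 (W ^ z - U ^ z)
        = (y - z) * padicValNat 2 k + y * padicValNat 2 V := by
      rw [hD, padicValNat.mul (by positivity) (by positivity),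
        padicValNat.pow k _, padicValNat.pow V _]
    rcases Nat.even_or_odd z with hze | hzo
    · -- z even
      obtain ⟨t, ht⟩ := id hze
      have hy3 : 3 ≤ y := by omega
      have hLTE := padicValNat.pow_two_sub_pow hUW hWUdvd hWodd hz.ne' hze
      have hmul : padicValNat 2 (W + U) + padicValNat 2 (W - U)
          = 2 * padicValNat 2 V := by
        rw [← padicValNat.mul (by omega) (by omega)]
        have e : (W + U) * (W - U) = V ^ 2 := by rw [← Nat.sq_sub_sq]; omega
        rw [e, padicValNat.pow V _]
      set A := padicValNat 2 V with hA
      set Z := padicValNat 2 z with hZ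
      have hineq : y * A + 1 ≤ 2 * A + Z := by omega
      have hsplit : y * A = (y - 2) * A + 2 * A := by rw [← add_mul]; congr 1; omega
      have hmono : 2 * (y - 2) ≤ (y - 2) * A := by
        calc 2 * (y - 2) = (y - 2) * 2 := by ring
          _ ≤ (y - 2) * A := Nat.mul_le_mul_left _ hv2V
      have hZge : 2 * (y - 2) ≤ Z := by omega
      have hdvd : 2 ^ (2 * (y - 2)) ∣ z := (padicValNat_dvd_iff_le hz.ne').mpr hZge
      have h4pow : (4 : ℕ) ^ (y - 2) = 2 ^ (2 * (y - 2)) := by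
        rw [show (4 : ℕ) = 2 ^ 2 from rfl, ← pow_mul]
      have hzge : 4 ^ (y - 2) ≤ z := by
        rw [h4pow]; exact Nat.le_of_dvd hz hdvd
      have := aux_gap4 hy3
      omega
    · -- z odd
      have hy2 : 2 ≤ y := by omega
      have h2z0 : 2 * z ≠ 0 := by omega
      have hLTE := padicValNat.pow_two_sub_pow hUW hWUdvd hWodd h2z0 (even_two_mul z)
      have hv2z : padicValNat 2 (2 * z) = 1 := by
        rw [padicValNat.mul two_ne_zero hz.ne', padicValNat.self (by norm_num),
          padicValNat.eq_zero_of_not_dvd (by have := Nat.odd_iff.mp hzo; omega : ¬ 2 ∣ z)]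
      have hfact : W ^ (2 * z) - U ^ (2 * z) = (W ^ z + U ^ z) * (W ^ z - U ^ z) := by
        rw [show 2 * z = z * 2 by ring, pow_mul, pow_mul, Nat.sq_sub_sq]
      have hsum0 : W ^ z + U ^ z ≠ 0 := by positivity
      have hvmul : padicValNat 2 (W ^ (2 * z) - U ^ (2 * z))
          = padicValNat 2 (W ^ z + U ^ z) + padicValNat 2 (W ^ z - U ^ z) := by
        rw [hfact, padicValNat.mul hsum0 hD0]
      have hWUd : (W + U) ∣ (W ^ z + U ^ z) := Odd.nat_add_dvd_pow_add_pow W U hzo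
      have hmono : padicValNat 2 (W + U) ≤ padicValNat 2 (W ^ z + U ^ z) :=
        aux_pv_le_of_dvd hWUd hsum0
      -- v2(D) ≤ v2(W-U)
      have hDle : padicValNat 2 (W ^ z - U ^ z) ≤ padicValNat 2 (W - U) := by omega
      have h2A : 2 * padicValNat 2 V ≤ y * padicValNat 2 V :=
        Nat.mul_le_mul_right _ hy2
      omega

/- ## Main theorem -/

set_option maxHeartbeats 2000000 in
theorem le_corollary_distinct (p q : ℕ) (hq : 1 ≤ q) (hpq : q < p) (hcop : Nat.Coprime p q)
    (hpar : p % 2 ≠ q % 2) (k : ℕ) (hk : 0 < k)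
    (x y z : ℕ) (hx : 0 < x) (hy : 0 < y) (hz : 0 < z)
    (heq : (k * (p ^ 2 - q ^ 2)) ^ x + (k * (2 * p * q)) ^ y = (k * (p ^ 2 + q ^ 2)) ^ z)
    (hne : ¬(x = 2 ∧ y = 2 ∧ z = 2)) :
    x ≠ y ∧ y ≠ z ∧ x ≠ z := by
  set U := p ^ 2 - q ^ 2 with hUdef
  set V := 2 * p * q with hVdef
  set W := p ^ 2 + q ^ 2 with hWdef
  have hp2 : 2 ≤ p := by omega
  have hq2p2 : q ^ 2 < p ^ 2 := Nat.pow_lt_pow_left hpq two_ne_zero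
  have hqq : q * q < p * p := by nlinarith
  -- basic sizes
  have hpqZ : (q : ℤ) + 1 ≤ (p : ℤ) := by exact_mod_cast hpq
  have hqZ : (1 : ℤ) ≤ (q : ℤ) := by exact_mod_cast hq
  have hpqpos : (0 : ℤ) < (p : ℤ) - (q : ℤ) := by linarith
  have hsqZ : ((q : ℤ) + 1) ^ 2 ≤ (p : ℤ) ^ 2 :=
    pow_le_pow_left₀ (by linarith) hpqZ 2
  have hU3 : 3 ≤ U := by
    rw [hUdef]; zify [hq2p2.le]; nlinarith [hsqZ, hqZ]
  have hV4 : 4 ≤ V := by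
    rw [hVdef]; zify
    nlinarith [mul_le_mul (show (2:ℤ) ≤ (p:ℤ) by linarith) hqZ (by linarith) (by linarith)]
  have hW5 : 5 ≤ W := by
    rw [hWdef]; zify
    nlinarith [hsqZ, hqZ, sq_nonneg ((q:ℤ))]
  have hq21 : 1 ≤ q ^ 2 := Nat.one_le_pow _ _ (by omega)
  have hUW : U < W := by rw [hUdef, hWdef]; omega
  have hVW : V < W := by
    rw [hVdef, hWdef]; zify
    nlinarith [mul_pos hpqpos hpqpos]
  have hWUV : W < U + V := by
    rw [hUdef, hVdef, hWdef]; zify [hq2p2.le]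
    nlinarith [mul_pos hpqpos (show (0:ℤ) < (q:ℤ) by linarith)]
  -- Pythagorean identity
  have hUVW : U ^ 2 + V ^ 2 = W ^ 2 := by
    rw [hUdef, hVdef, hWdef]
    zify [hq2p2.le]
    ring
  -- parities
  have hpmod : p ^ 2 % 2 = p % 2 := by
    rw [Nat.pow_mod]
    rcases Nat.mod_two_eq_zero_or_one p with h | h <;> simp [h]
  have hqmod : q ^ 2 % 2 = q % 2 := by
    rw [Nat.pow_mod]
    rcases Nat.mod_two_eq_zero_or_one q with h | h <;> simp [h]
  have hUodd : ¬ 2 ∣ U := by rw [hUdef]; omega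
  have hWodd : ¬ 2 ∣ W := by rw [hWdef]; omega
  -- coprimality U V
  have hcopUp : Nat.gcd U p = 1 := by
    have hg1 : Nat.gcd U p ∣ q ^ 2 := by
      have h1 : Nat.gcd U p ∣ p ^ 2 := (Nat.gcd_dvd_right U p).trans (dvd_pow_self p two_ne_zero)
      have h2 : Nat.gcd U p ∣ U := Nat.gcd_dvd_left U p
      have e : q ^ 2 = p ^ 2 - U := by rw [hUdef]; omega
      rw [e]; exact Nat.dvd_sub h1 h2
    have hg2 : Nat.gcd U p ∣ Nat.gcd p (q ^ 2) := Nat.dvd_gcd (Nat.gcd_dvd_right U p) hg1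
    have : Nat.gcd p (q ^ 2) = 1 := hcop.pow_right 2
    rw [this] at hg2
    exact Nat.dvd_one.mp hg2
  have hcopUq : Nat.gcd U q = 1 := by
    have hg1 : Nat.gcd U q ∣ p ^ 2 := by
      have h1 : Nat.gcd U q ∣ q ^ 2 := (Nat.gcd_dvd_right U q).trans (dvd_pow_self q two_ne_zero)
      have h2 : Nat.gcd U q ∣ U := Nat.gcd_dvd_left U q
      have e : p ^ 2 = U + q ^ 2 := by rw [hUdef]; omega
      rw [e]; exact Nat.dvd_add h2 h1
    have hg2 : Nat.gcd U q ∣ Nat.gcd q (p ^ 2) := Nat.dvd_gcd (Nat.gcd_dvd_right U q) hg1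
    have : Nat.gcd q (p ^ 2) = 1 := hcop.symm.pow_right 2
    rw [this] at hg2
    exact Nat.dvd_one.mp hg2
  have hcopU2 : Nat.gcd U 2 = 1 :=
    ((Nat.prime_two.coprime_iff_not_dvd).mpr hUodd).symm
  have hcUV : Nat.Coprime U V := by
    have h1 : Nat.Coprime U 2 := hcopU2
    have h2 : Nat.Coprime U p := hcopUp
    have h3 : Nat.Coprime U q := hcopUq
    rw [hVdef]
    exact (h1.mul_right h2).mul_right h3
  have hcUW : Nat.Coprime U W := by
    have hg1 : Nat.gcd U W ∣ V ^ 2 := by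
      have h1 : Nat.gcd U W ∣ W ^ 2 := (Nat.gcd_dvd_right U W).trans (dvd_pow_self W two_ne_zero)
      have h2 : Nat.gcd U W ∣ U ^ 2 := (Nat.gcd_dvd_left U W).trans (dvd_pow_self U two_ne_zero)
      have e : V ^ 2 = W ^ 2 - U ^ 2 := by omega
      rw [e]; exact Nat.dvd_sub h1 h2
    have hg2 : Nat.gcd U W ∣ Nat.gcd U (V ^ 2) :=
      Nat.dvd_gcd (Nat.gcd_dvd_left U W) hg1
    have : Nat.gcd U (V ^ 2) = 1 := hcUV.pow_right 2
    rw [this] at hg2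
    exact Nat.dvd_one.mp hg2
  have hcVW : Nat.Coprime V W := by
    have hg1 : Nat.gcd V W ∣ U ^ 2 := by
      have h1 : Nat.gcd V W ∣ W ^ 2 := (Nat.gcd_dvd_right V W).trans (dvd_pow_self W two_ne_zero)
      have h2 : Nat.gcd V W ∣ V ^ 2 := (Nat.gcd_dvd_left V W).trans (dvd_pow_self V two_ne_zero)
      have e : U ^ 2 = W ^ 2 - V ^ 2 := by omega
      rw [e]; exact Nat.dvd_sub h1 h2
    have hg2 : Nat.gcd V W ∣ Nat.gcd V (U ^ 2) :=
      Nat.dvd_gcd (Nat.gcd_dvd_left V W) hg1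
    have : Nat.gcd V (U ^ 2) = 1 := hcUV.symm.pow_right 2
    rw [this] at hg2
    exact Nat.dvd_one.mp hg2
  -- 2-adic facts
  have hp0 : p ≠ 0 := by omega
  have hq0 : q ≠ 0 := by omega
  have hv2V_eq : padicValNat 2 V = 1 + padicValNat 2 p + padicValNat 2 q := by
    rw [hVdef, padicValNat.mul (by omega) hq0, padicValNat.mul (by norm_num) hp0,
      padicValNat.self (by norm_num)]
  have hv2V : 2 ≤ padicValNat 2 V := by
    rcases Nat.mod_two_eq_zero_or_one p with hpe | hpe
    · have : 1 ≤ padicValNat 2 p := by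
        have := (padicValNat_dvd_iff_le hp0 (n := 1)).mp (by simpa using (by omega : 2 ∣ p))
        omega
      omega
    · have hqe : q % 2 = 0 := by omega
      have : 1 ≤ padicValNat 2 q := by
        have := (padicValNat_dvd_iff_le hq0 (n := 1)).mp (by simpa using (by omega : 2 ∣ q))
        omega
      omega
  have hWU : padicValNat 2 (W - U) < 2 * padicValNat 2 V := by
    have e : W - U = 2 * q ^ 2 := by rw [hUdef, hWdef]; omega
    have hval : padicValNat 2 (W - U) = 1 + 2 * padicValNat 2 q := by
      rw [e, padicValNat.mul (by norm_num) (by positivity), padicValNat.self (by norm_num),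
        padicValNat.pow q _]
    omega
  -- existence of a prime of U not dividing W - V
  have hs : ∃ s, s.Prime ∧ s ∣ U ∧ ¬ s ∣ (W - V) := by
    have hpq3 : 3 ≤ p + q := by omega
    have hpqodd : (p + q) % 2 = 1 := by omega
    set s := (p + q).minFac with hsdef
    have hsp : s.Prime := Nat.minFac_prime (by omega)
    have hspq : s ∣ p + q := Nat.minFac_dvd _
    have hs2 : s ≠ 2 := by
      intro h
      rw [h] at hspq
      omega
    have hsU : s ∣ U := by
      have e : U = (p + q) * (p - q) := by rw [hUdef, Nat.sq_sub_sq]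
      rw [e]
      exact hspq.mul_right _
    have hWVe : W - V = (p - q) ^ 2 := by
      have h2 : (p - q) * (p - q) + 2 * p * q = p ^ 2 + q ^ 2 := by
        zify [hpq.le]; ring
      have h3 : (p - q) ^ 2 = (p - q) * (p - q) := pow_two _
      rw [hWdef, hVdef]
      omega
    refine ⟨s, hsp, hsU, ?_⟩
    intro hdvd
    rw [hWVe] at hdvd
    have hspq' : s ∣ p - q := hsp.dvd_of_dvd_pow hdvd
    have h2p : s ∣ 2 * p := by
      have e : 2 * p = (p + q) + (p - q) := by omega
      rw [e]; exact Nat.dvd_add hspq hspq'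
    have h2q : s ∣ 2 * q := by
      have e : 2 * q = (p + q) - (p - q) := by omega
      rw [e]; exact Nat.dvd_sub hspq hspq'
    have hsop : s ∣ p := by
      rcases hsp.dvd_mul.mp h2p with h' | h'
      · exact absurd ((Nat.prime_dvd_prime_iff_eq hsp Nat.prime_two).mp h') hs2
      · exact h'
    have hsoq : s ∣ q := by
      rcases hsp.dvd_mul.mp h2q with h' | h'
      · exact absurd ((Nat.prime_dvd_prime_iff_eq hsp Nat.prime_two).mp h') hs2
      · exact h'
    have := Nat.dvd_gcd hsop hsoq
    rw [hcop] at this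
    exact hsp.ne_one (Nat.dvd_one.mp this)
  -- rewrite the main equation
  have heq' : k ^ x * U ^ x + k ^ y * V ^ y = k ^ z * W ^ z := by
    rw [← mul_pow, ← mul_pow, ← mul_pow]
    exact heq
  -- assemble
  have keyXY : x = y → x = 2 ∧ z = 2 := by
    intro hxy
    rw [← hxy] at heq'
    exact caseXY U V W k x z hk hx hz hUVW hU3 hV4 hW5 hUW hVW hWUV hcUW hcVW hWodd heq'
  refine ⟨?_, ?_, ?_⟩
  · intro hxy
    obtain ⟨hx2, hz2⟩ := keyXY hxy
    exact hne ⟨hx2, hxy ▸ hx2, hz2⟩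
  · intro hyz
    have hxz : x = z := by
      rw [hyz] at heq'
      exact caseYZ U V W k x z hk hx hz hUVW hU3 hW5 hUW hVW hcUV hcUW hUodd hs heq'
    have hxy : x = y := by omega
    obtain ⟨hx2, hz2⟩ := keyXY hxy
    exact hne ⟨hx2, by omega, hz2⟩
  · intro hxz
    have hyz : y = z := by
      rw [hxz] at heq'
      exact caseXZ U V W k y z hk hy hz hUVW hU3 hV4 hW5 hUW hVW hUodd hWodd hv2V hWU heq'
    have hxy : x = y := by omega
    obtain ⟨hx2, hz2⟩ := keyXY hxy
    exact hne ⟨hx2, by omega, hz2⟩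
end

section
/- Let n and k be positive integers such that every prime divisor of 4n²−1 divides k. Then the only solution in positive integers (x, y, z) of the equation ((4n²−1)k)^x + (4nk)^y = ((4n²+1)k)^z is (x, y, z) = (2, 2, 2). -/
set_option maxHeartbeats 1000000

-- valuation of a sum when valuations differ
lemma padd_lt {p : ℕ} [hp : Fact p.Prime] {u v : ℕ} (hu : u ≠ 0) (hv : v ≠ 0)
    (h : padicValNat p u < padicValNat p v) :
    padicValNat p (u + v) = padicValNat p u := by
  have h1 : p ^ padicValNat p u ∣ u + v :=
    dvd_add pow_padicValNat_dvd ((padicValNat_dvd_iff_le hv).mpr h.le)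
  have h2 : ¬ p ^ (padicValNat p u + 1) ∣ u + v := by
    intro hd
    have hv' : p ^ (padicValNat p u + 1) ∣ v := (padicValNat_dvd_iff_le hv).mpr h
    rw [Nat.add_comm u v] at hd
    exact pow_succ_padicValNat_not_dvd hu ((Nat.dvd_add_right hv').mp hd)
  have huv : u + v ≠ 0 := by positivity
  have lb := (padicValNat_dvd_iff_le huv).mp h1
  by_contra hne
  have : padicValNat p u + 1 ≤ padicValNat p (u + v) := by omega
  exact h2 ((padicValNat_dvd_iff_le huv).mpr this)

lemma padd_min {p : ℕ} [hp : Fact p.Prime] {u v : ℕ} (hu : u ≠ 0) (hv : v ≠ 0)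
    (h : padicValNat p v ≤ padicValNat p u) :
    padicValNat p v ≤ padicValNat p (u + v) := by
  have h1 : p ^ padicValNat p v ∣ u + v :=
    dvd_add ((padicValNat_dvd_iff_le hu).mpr h) pow_padicValNat_dvd
  exact (padicValNat_dvd_iff_le (by positivity)).mp h1

lemma lt_two_mul_three_pow {x : ℕ} (hx : 3 ≤ x) : x < 2 * 3 ^ (x - 2) := by
  induction x with
  | zero => omega
  | succ m ih =>
    rcases Nat.lt_or_ge m 3 with hm | hm
    · interval_cases m <;> simp_all
    · have := ih hm
      have h2 : m + 1 - 2 = (m - 2) + 1 := by omega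
      rw [h2, pow_succ]
      omega

lemma geom_sum_nat (C : ℕ) (hC : 1 ≤ C) : ∀ z : ℕ,
    (C - 1) * (Finset.range z).sum (C ^ ·) + 1 = C ^ z := by
  intro z
  induction z with
  | zero => simp
  | succ m ih =>
    rw [Finset.sum_range_succ, Nat.mul_add, pow_succ]
    have h1 : (C - 1) * C ^ m + C ^ m = C ^ m * C := by
      have h2 : (C - 1) * C ^ m + C ^ m = (C - 1 + 1) * C ^ m := by ring
      rw [h2, Nat.sub_add_cancel hC, mul_comm]
    omega

lemma geom_sum_parity (C : ℕ) (hC : ¬ 2 ∣ C) : ∀ z : ℕ,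
    (Finset.range z).sum (C ^ ·) % 2 = z % 2 := by
  intro z
  induction z with
  | zero => simp
  | succ m ih =>
    rw [Finset.sum_range_succ]
    have hodd : C ^ m % 2 = 1 := by
      have : ¬ 2 ∣ C ^ m := fun hd => hC (Nat.Prime.dvd_of_dvd_pow Nat.prime_two hd)
      omega
    omega

theorem ma_wu (n k : ℕ) (hn : 0 < n) (hk : 0 < k)
    (h : ∀ p : ℕ, p.Prime → p ∣ 4 * n ^ 2 - 1 → p ∣ k) :
    ∀ x y z : ℕ, 0 < x → 0 < y → 0 < z →
      (((4 * n ^ 2 - 1) * k) ^ x + (4 * n * k) ^ y = ((4 * n ^ 2 + 1) * k) ^ z ↔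
        x = 2 ∧ y = 2 ∧ z = 2) := by
  intro x y z hx hy hz
  have hn2 : 1 ≤ n ^ 2 := Nat.one_le_pow _ _ hn
  obtain ⟨A, hA1⟩ : ∃ A, A + 1 = 4 * n ^ 2 := ⟨4 * n ^ 2 - 1, by omega⟩
  have hAeq : 4 * n ^ 2 - 1 = A := by omega
  obtain ⟨C, hC1⟩ : ∃ C, C = 4 * n ^ 2 + 1 := ⟨_, rfl⟩
  obtain ⟨B, hB1⟩ : ∃ B, B = 4 * n := ⟨_, rfl⟩
  rw [hAeq] at h ⊢
  rw [← hC1, ← hB1]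
  have hApos : 0 < A := by omega
  have hA3 : 3 ≤ A := by omega
  have hAodd : ¬ 2 ∣ A := by omega
  have hBpos : 0 < B := by omega
  have hCpos : 0 < C := by omega
  have hsq : (A + 1) * (A + 1) = (4 * n ^ 2) * (4 * n ^ 2) := by rw [hA1]
  have hABC : A ^ 2 + B ^ 2 = C ^ 2 := by nlinarith [hsq, hA1, hB1, hC1]
  have hnn : n ≤ n ^ 2 := Nat.le_self_pow two_ne_zero n
  have hBC : B < C := by omega
  have hAC : A < C := by omega
  have hCBsq : C ^ 2 - B ^ 2 = A ^ 2 := by rw [← hABC]; exact Nat.add_sub_cancel _ _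
  constructor
  · intro heq
    -- common facts
    have hkA : ∀ p : ℕ, p.Prime → p ∣ A → ¬ p ∣ B ∧ ¬ p ∣ C ∧ p ≠ 2 := by
      intro p pp hpA
      have hp2 : p ≠ 2 := by rintro rfl; exact hAodd hpA
      refine ⟨?_, ?_, hp2⟩
      · intro hpB
        have hpn : p ∣ n := by
          rcases (Nat.Prime.dvd_mul pp).mp (hB1 ▸ hpB) with h4 | hn'
          · exact absurd ((Nat.prime_dvd_prime_iff_eq pp Nat.prime_two).mp
              (pp.dvd_of_dvd_pow (show p ∣ 2 ^ 2 by norm_num at h4 ⊢; exact h4))) hp2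
          · exact hn'
        have hd : p ∣ 4 * n ^ 2 :=
          dvd_mul_of_dvd_right (hpn.trans (dvd_pow_self n two_ne_zero)) 4
        have h1 : p ∣ 4 * n ^ 2 - A := Nat.dvd_sub hd hpA
        have h2 : 4 * n ^ 2 - A = 1 := by omega
        rw [h2] at h1
        exact pp.ne_one (Nat.dvd_one.mp h1)
      · intro hpC
        have h1 : p ∣ C - A := Nat.dvd_sub hpC hpA
        have h2 : C - A = 2 := by omega
        rw [h2] at h1
        exact hp2 ((Nat.prime_dvd_prime_iff_eq pp Nat.prime_two).mp h1)
    have hAk0 : A * k ≠ 0 := by positivity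
    have hBk0 : B * k ≠ 0 := by positivity
    have hCk0 : C * k ≠ 0 := by positivity
    rcases le_or_gt y x with hyx | hxy
    · -- Case 1 : y ≤ x
      set p := (2 * n + 1).minFac with hpdef
      have hp : p.Prime := Nat.minFac_prime (by omega)
      haveI : Fact p.Prime := ⟨hp⟩
      have hpdvd : p ∣ 2 * n + 1 := Nat.minFac_dvd _
      obtain ⟨u, hu⟩ : ∃ u, u + 1 = 2 * n := ⟨2 * n - 1, by omega⟩
      have hsq2 : (u + 1) * (u + 1) = (2 * n) * (2 * n) := by rw [hu]
      have hfacA : A = u * (u + 2) := by nlinarith [hsq2, hA1]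
      have hpA : p ∣ A := by
        rw [hfacA]
        exact Dvd.dvd.mul_left (by rw [show u + 2 = 2 * n + 1 by omega]; exact hpdvd) u
      have hpk : p ∣ k := h p hp hpA
      obtain ⟨hpB, hpC, hp2⟩ := hkA p hp hpA
      have hν : 1 ≤ padicValNat p A := one_le_padicValNat_of_dvd hApos.ne' hpA
      have hκ : 1 ≤ padicValNat p k := one_le_padicValNat_of_dvd hk.ne' hpk
      have vu : padicValNat p ((A * k) ^ x) = x * (padicValNat p A + padicValNat p k) := by
        rw [padicValNat.pow _ _, padicValNat.mul (by omega) (by omega)]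
      have vv : padicValNat p ((B * k) ^ y) = y * padicValNat p k := by
        rw [padicValNat.pow _ _, padicValNat.mul (by omega) (by omega),
          padicValNat.eq_zero_of_not_dvd hpB, zero_add]
      have vw : padicValNat p ((C * k) ^ z) = z * padicValNat p k := by
        rw [padicValNat.pow _ _, padicValNat.mul (by omega) (by omega),
          padicValNat.eq_zero_of_not_dvd hpC, zero_add]
      have hlt : padicValNat p ((B * k) ^ y) < padicValNat p ((A * k) ^ x) := by
        rw [vu, vv]
        have e1 : y * padicValNat p k < y * (padicValNat p A + padicValNat p k) :=
          mul_lt_mul_of_pos_left (by omega) hy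
        exact lt_of_lt_of_le e1 (Nat.mul_le_mul_right _ hyx)
      have hzy : z = y := by
        have heq' : (B * k) ^ y + (A * k) ^ x = (C * k) ^ z := by omega
        have hv := padd_lt (pow_ne_zero _ hBk0) (pow_ne_zero _ hAk0) hlt
        rw [heq', vw, vv] at hv
        exact Nat.eq_of_mul_eq_mul_right (by omega) hv
      have hzy' : y = z := hzy.symm
      subst hzy'
      obtain ⟨d, rfl⟩ : ∃ d, x = y + d := ⟨x - y, by omega⟩
      have hE : A ^ (y + d) * k ^ d + B ^ y = C ^ y := by
        have expand : (A ^ (y + d) * k ^ d + B ^ y) * k ^ y = C ^ y * k ^ y := by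
          calc (A ^ (y + d) * k ^ d + B ^ y) * k ^ y
              = (A * k) ^ (y + d) + (B * k) ^ y := by ring
            _ = (C * k) ^ y := heq
            _ = C ^ y * k ^ y := by ring
        exact Nat.eq_of_mul_eq_mul_right (by positivity) expand
      rcases Nat.even_or_odd y with hyev | hyodd
      · -- y even
        obtain ⟨m, hm⟩ := hyev
        have hym : y = 2 * m := by omega
        have hm0 : m ≠ 0 := by omega
        have hoddp : Odd p := hp.odd_of_ne_two hp2
        have hxyd : p ∣ C ^ 2 - B ^ 2 := by rw [hCBsq]; exact dvd_pow hpA two_ne_zero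
        have hxd : ¬ p ∣ C ^ 2 := fun hd => hpC (hp.dvd_of_dvd_pow hd)
        have hBC2 : B ^ 2 < C ^ 2 := Nat.pow_lt_pow_left hBC two_ne_zero
        have lte := padicValNat.pow_sub_pow hoddp hBC2 hxyd hxd hm0
        rw [← pow_mul, ← pow_mul, ← hym] at lte
        have hCyBy : C ^ y - B ^ y = A ^ (y + d) * k ^ d := by omega
        rw [hCyBy, hCBsq] at lte
        have vlhs : padicValNat p (A ^ (y + d) * k ^ d) =
            (y + d) * padicValNat p A + d * padicValNat p k := by
          rw [padicValNat.mul (by positivity) (by positivity),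
            padicValNat.pow _ _, padicValNat.pow _ _]
        have vrhs : padicValNat p (A ^ 2) = 2 * padicValNat p A := by
          rw [padicValNat.pow _ _]
        rw [vlhs, vrhs] at lte
        rcases Nat.eq_or_lt_of_le (Nat.one_le_iff_ne_zero.mpr hm0) with hm1 | hm2
        · -- m = 1, y = 2
          rw [← hm1, padicValNat.one] at lte
          have hd0 : d = 0 := by
            by_contra hd0
            have e1 : (y + d) * padicValNat p A = y * padicValNat p A + d * padicValNat p A := by
              ring
            have e2 : 1 ≤ d * padicValNat p A :=
              Nat.one_le_iff_ne_zero.mpr (Nat.mul_ne_zero hd0 (by omega))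
            have e3 : 2 * padicValNat p A ≤ y * padicValNat p A :=
              Nat.mul_le_mul_right _ (by omega)
            omega
          refine ⟨by omega, by omega, by omega⟩
        · -- m ≥ 2, y ≥ 4
          exfalso
          have hy4 : 4 ≤ y := by omega
          obtain ⟨w, hw⟩ : ∃ w, y = w + 2 := ⟨y - 2, by omega⟩
          have e1 : (y + d) * padicValNat p A
              = w * padicValNat p A + 2 * padicValNat p A + d * padicValNat p A := by
            rw [hw]; ring
          have e2 : w ≤ w * padicValNat p A := Nat.le_mul_of_pos_right w (by omega)
          have hvpm : w ≤ padicValNat p m := by omega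
          have c2 : p ^ padicValNat p m ≤ m := Nat.le_of_dvd (by omega) pow_padicValNat_dvd
          have c3 : 3 ≤ p := by have := hp.two_le; omega
          have c4 : 3 ^ w ≤ p ^ padicValNat p m :=
            le_trans (Nat.pow_le_pow_left c3 w) (Nat.pow_le_pow_right (by omega) hvpm)
          have c5 := lt_two_mul_three_pow (show 3 ≤ y by omega)
          rw [hw] at c5
          simp only [Nat.add_sub_cancel] at c5
          omega
      · -- y odd : impossible
        exfalso
        have hpCB : p ∣ C + B := by
          have e : C + B = (2 * n + 1) ^ 2 := by rw [hC1, hB1]; ring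
          rw [e]; exact dvd_pow hpdvd two_ne_zero
        have hcast : (A : ZMod p) ^ (y + d) * (k : ZMod p) ^ d + (B : ZMod p) ^ y
            = (C : ZMod p) ^ y := by exact_mod_cast congrArg (Nat.cast : ℕ → ZMod p) hE
        have hA0 : (A : ZMod p) = 0 := (ZMod.natCast_eq_zero_iff _ _).mpr hpA
        have hCB : (C : ZMod p) = - B := by
          have e : ((C + B : ℕ) : ZMod p) = 0 := (ZMod.natCast_eq_zero_iff _ _).mpr hpCB
          push_cast at e
          linear_combination e
        rw [hA0, zero_pow (by omega), zero_mul, zero_add, hCB, Odd.neg_pow hyodd] at hcast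
        have h2B : (2 : ZMod p) * (B : ZMod p) ^ y = 0 := by linear_combination hcast
        haveI : IsDomain (ZMod p) := ZMod.instIsDomain p
        rcases mul_eq_zero.mp h2B with h20 | hB0
        · have : ((2 : ℕ) : ZMod p) = 0 := by exact_mod_cast h20
          have := (ZMod.natCast_eq_zero_iff _ _).mp this
          exact hp2 ((Nat.prime_dvd_prime_iff_eq hp Nat.prime_two).mp this)
        · have : (B : ZMod p) = 0 := pow_eq_zero_iff (by omega) |>.mp hB0
          exact hpB ((ZMod.natCast_eq_zero_iff _ _).mp this)
    · -- Case 2 : x < y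
      have hq0 : (A.minFac).Prime := Nat.minFac_prime (by omega)
      have hq0A : A.minFac ∣ A := Nat.minFac_dvd _
      have hq0k : A.minFac ∣ k := h _ hq0 hq0A
      have hq02 : A.minFac ≠ 2 := (hkA _ hq0 hq0A).2.2
      have hk3 : 3 ≤ k := le_trans (by have := hq0.two_le; omega) (Nat.le_of_dvd hk hq0k)
      have hzy : z < y := by
        by_contra hzy
        push_neg at hzy
        obtain ⟨w, hw⟩ : ∃ w, y = w + 1 := ⟨y - 1, by omega⟩
        have hxw : x ≤ w := by omega
        have key : B ^ y + C ^ w ≤ C ^ y := by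
          calc B ^ y + C ^ w = B ^ w * B + C ^ w := by rw [hw]; ring
            _ ≤ C ^ w * B + C ^ w := by
                have h1 := Nat.pow_le_pow_left hBC.le w
                exact Nat.add_le_add_right (Nat.mul_le_mul_right _ h1) _
            _ = C ^ w * (B + 1) := by ring
            _ ≤ C ^ w * C := Nat.mul_le_mul_left _ (by omega)
            _ = C ^ y := by rw [hw]; ring
        have key2 : 3 * k ^ x ≤ k ^ y := by
          obtain ⟨e, he⟩ : ∃ e, y = x + e := ⟨y - x, by omega⟩
          have h1 : 3 ≤ k ^ e := le_trans hk3 (Nat.le_self_pow (by omega) k)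
          calc 3 * k ^ x ≤ k ^ e * k ^ x := Nat.mul_le_mul_right _ h1
            _ = k ^ y := by rw [he]; ring
        have key3 : A ^ x < C ^ w :=
          lt_of_lt_of_le (Nat.pow_lt_pow_left hAC (by omega))
            (Nat.pow_le_pow_right (by omega) hxw)
        have heqE : A ^ x * k ^ x + B ^ y * k ^ y = (C * k) ^ z := by
          rw [← mul_pow, ← mul_pow]; exact heq
        have big : C ^ y * k ^ y ≤ (C * k) ^ z := by
          calc C ^ y * k ^ y = (C * k) ^ y := by ring
            _ ≤ (C * k) ^ z := Nat.pow_le_pow_right (by positivity) hzy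
        have step : B ^ y * k ^ y + C ^ w * k ^ y ≤ C ^ y * k ^ y := by
          calc B ^ y * k ^ y + C ^ w * k ^ y = (B ^ y + C ^ w) * k ^ y := by ring
            _ ≤ C ^ y * k ^ y := Nat.mul_le_mul_right _ key
        have step2 : A ^ x * (3 * k ^ x) ≤ C ^ w * k ^ y :=
          Nat.mul_le_mul key3.le key2
        have pos : 0 < A ^ x * k ^ x := by positivity
        have e3 : A ^ x * (3 * k ^ x) = 3 * (A ^ x * k ^ x) := by ring
        omega
      have hallA : ∀ p, p.Prime → p ∣ A →
          z * padicValNat p k = x * (padicValNat p A + padicValNat p k) := by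
        intro p pp hpA
        haveI : Fact p.Prime := ⟨pp⟩
        have hpk := h p pp hpA
        obtain ⟨hpB, hpC, hp2⟩ := hkA p pp hpA
        have hν : 1 ≤ padicValNat p A := one_le_padicValNat_of_dvd hApos.ne' hpA
        have hκ : 1 ≤ padicValNat p k := one_le_padicValNat_of_dvd hk.ne' hpk
        have vu : padicValNat p ((A * k) ^ x) = x * (padicValNat p A + padicValNat p k) := by
          rw [padicValNat.pow _ _, padicValNat.mul (by omega) (by omega)]
        have vv : padicValNat p ((B * k) ^ y) = y * padicValNat p k := by
          rw [padicValNat.pow _ _, padicValNat.mul (by omega) (by omega),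
            padicValNat.eq_zero_of_not_dvd hpB, zero_add]
        have vw : padicValNat p ((C * k) ^ z) = z * padicValNat p k := by
          rw [padicValNat.pow _ _, padicValNat.mul (by omega) (by omega),
            padicValNat.eq_zero_of_not_dvd hpC, zero_add]
        have hlt : padicValNat p ((A * k) ^ x) < padicValNat p ((B * k) ^ y) := by
          by_contra hge
          push_neg at hge
          have h2 := padd_min (pow_ne_zero _ hAk0) (pow_ne_zero _ hBk0) hge
          rw [heq, vw, vv] at h2
          have : y ≤ z := Nat.le_of_mul_le_mul_right h2 (by omega)
          omega
        have h3 := padd_lt (pow_ne_zero _ hAk0) (pow_ne_zero _ hBk0) hlt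
        rw [heq, vw, vu] at h3
        exact h3
      have hxz : x < z := by
        haveI : Fact (A.minFac).Prime := ⟨hq0⟩
        have h0 := hallA A.minFac hq0 hq0A
        have hν : 1 ≤ padicValNat A.minFac A := one_le_padicValNat_of_dvd hApos.ne' hq0A
        have hκ : 1 ≤ padicValNat A.minFac k := one_le_padicValNat_of_dvd hk.ne' hq0k
        have e1 : x * (padicValNat A.minFac A + padicValNat A.minFac k)
            = x * padicValNat A.minFac A + x * padicValNat A.minFac k := by ring
        have e2 : x ≤ x * padicValNat A.minFac A := Nat.le_mul_of_pos_right x (by omega)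
        have e3 : x * padicValNat A.minFac k < z * padicValNat A.minFac k := by omega
        exact lt_of_mul_lt_mul_right e3 (Nat.zero_le _)
      have hkprime : ∀ p, p.Prime → p ∣ k → p ∣ A := by
        intro p pp hpk
        by_contra hpA
        haveI : Fact p.Prime := ⟨pp⟩
        have hκ : 1 ≤ padicValNat p k := one_le_padicValNat_of_dvd hk.ne' hpk
        have vu : padicValNat p ((A * k) ^ x) = x * padicValNat p k := by
          rw [padicValNat.pow _ _, padicValNat.mul (by omega) (by omega),
            padicValNat.eq_zero_of_not_dvd hpA, zero_add]
        have vv' : padicValNat p ((B * k) ^ y) = y * (padicValNat p B + padicValNat p k) := by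
          rw [padicValNat.pow _ _, padicValNat.mul (by omega) (by omega)]
        have vw' : padicValNat p ((C * k) ^ z) = z * (padicValNat p C + padicValNat p k) := by
          rw [padicValNat.pow _ _, padicValNat.mul (by omega) (by omega)]
        have hlt : padicValNat p ((A * k) ^ x) < padicValNat p ((B * k) ^ y) := by
          rw [vu, vv']
          calc x * padicValNat p k < y * padicValNat p k :=
                mul_lt_mul_of_pos_right hxy (by omega)
            _ ≤ y * (padicValNat p B + padicValNat p k) := Nat.mul_le_mul_left _ (by omega)
        have h3 := padd_lt (pow_ne_zero _ hAk0) (pow_ne_zero _ hBk0) hlt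
        rw [heq, vw', vu] at h3
        have e1 : z * padicValNat p k ≤ z * (padicValNat p C + padicValNat p k) :=
          Nat.mul_le_mul_left _ (by omega)
        have e2 : x * padicValNat p k < z * padicValNat p k :=
          mul_lt_mul_of_pos_right hxz (by omega)
        omega
      obtain ⟨c, rfl⟩ : ∃ c, z = x + c := ⟨z - x, by omega⟩
      have hc1 : 1 ≤ c := by omega
      have hkcA : k ^ c = A ^ x := by
        apply Nat.eq_of_factorization_eq (pow_ne_zero _ (by omega)) (pow_ne_zero _ (by omega))
        intro p
        by_cases pp : p.Prime
        · rw [Nat.factorization_pow, Nat.factorization_pow]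
          simp only [Finsupp.smul_apply, smul_eq_mul]
          rw [Nat.factorization_def _ pp, Nat.factorization_def _ pp]
          by_cases hpA : p ∣ A
          · have h0 := hallA p pp hpA
            have e1 : (x + c) * padicValNat p k
                = x * padicValNat p k + c * padicValNat p k := by ring
            have e2 : x * (padicValNat p A + padicValNat p k)
                = x * padicValNat p A + x * padicValNat p k := by ring
            omega
          · have hpk : ¬ p ∣ k := fun hd => hpA (hkprime p pp hd)
            rw [padicValNat.eq_zero_of_not_dvd hpk, padicValNat.eq_zero_of_not_dvd hpA]
            simp
        · rw [Nat.factorization_eq_zero_of_not_prime _ pp,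
            Nat.factorization_eq_zero_of_not_prime _ pp]
      have hAx : A ^ x * k ^ x = k ^ (x + c) := by rw [← hkcA]; ring
      have heqE : A ^ x * k ^ x + B ^ y * k ^ y = C ^ (x + c) * k ^ (x + c) := by
        rw [← mul_pow, ← mul_pow, ← mul_pow]; exact heq
      rw [hAx] at heqE
      have hCpow1 : 1 ≤ C ^ (x + c) := Nat.one_le_pow _ _ hCpos
      have h5 : (C ^ (x + c) - 1) * k ^ (x + c) + k ^ (x + c)
          = C ^ (x + c) * k ^ (x + c) := by
        have e : (C ^ (x + c) - 1) + 1 = C ^ (x + c) := by omega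
        calc (C ^ (x + c) - 1) * k ^ (x + c) + k ^ (x + c)
            = ((C ^ (x + c) - 1) + 1) * k ^ (x + c) := by ring
          _ = C ^ (x + c) * k ^ (x + c) := by rw [e]
      obtain ⟨e, hye⟩ : ∃ e, y = (x + c) + e := ⟨y - (x + c), by omega⟩
      have he1 : 1 ≤ e := by omega
      have hfin : B ^ y * k ^ e = C ^ (x + c) - 1 := by
        apply Nat.eq_of_mul_eq_mul_right (show 0 < k ^ (x + c) by positivity)
        calc B ^ y * k ^ e * k ^ (x + c) = B ^ y * k ^ y := by rw [hye]; ring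
          _ = (C ^ (x + c) - 1) * k ^ (x + c) := by omega
      have hkodd : ¬ 2 ∣ k := fun hd => hAodd (hkprime 2 Nat.prime_two hd)
      have hCodd : ¬ 2 ∣ C := by omega
      have v2k : padicValNat 2 k = 0 := padicValNat.eq_zero_of_not_dvd hkodd
      have v2B : padicValNat 2 B = 2 + padicValNat 2 n := by
        have e : B = 2 ^ 2 * n := by rw [hB1]; norm_num
        rw [e, padicValNat.mul (by norm_num) (by omega), padicValNat.prime_pow]
      have hv2 : padicValNat 2 (C ^ (x + c) - 1) = y * (2 + padicValNat 2 n) := by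
        rw [← hfin, padicValNat.mul (by positivity) (by positivity),
          padicValNat.pow _ _, padicValNat.pow _ _, v2B, v2k]
        omega
      have v2C1 : padicValNat 2 (C - 1) = 2 + 2 * padicValNat 2 n := by
        have e0 : C - 1 = 2 ^ 2 * n ^ 2 := by
          have e1 : C - 1 = 4 * n ^ 2 := by omega
          rw [e1]; norm_num
        rw [e0, padicValNat.mul (by norm_num) (by omega), padicValNat.prime_pow,
          padicValNat.pow _ _]
      have hy3 : 3 ≤ y := by omega
      exfalso
      rcases Nat.even_or_odd (x + c) with hev | hodd
      · -- z even
        have lte2 := padicValNat.pow_two_sub_pow (x := C) (y := 1) (by omega) (by omega)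
          hCodd (by omega) hev
        simp only [one_pow] at lte2
        have v2C2 : padicValNat 2 (C + 1) = 1 := by
          have e0 : C + 1 = 2 * (2 * n ^ 2 + 1) := by omega
          rw [e0, padicValNat.mul (by norm_num) (by omega)]
          rw [padicValNat.self (by norm_num : (1:ℕ) < 2)]
          rw [padicValNat.eq_zero_of_not_dvd (by omega : ¬ (2:ℕ) ∣ 2 * n ^ 2 + 1)]
        rw [hv2, v2C1, v2C2] at lte2
        have h6 : y * (2 + padicValNat 2 n) = 2 * y + y * padicValNat 2 n := by ring
        have h7 : 2 * padicValNat 2 n ≤ y * padicValNat 2 n :=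
          Nat.mul_le_mul_right _ (by omega)
        have hv2z : 2 * (x + c) ≤ padicValNat 2 (x + c) := by omega
        have c2 : 2 ^ padicValNat 2 (x + c) ≤ x + c :=
          Nat.le_of_dvd (by omega) pow_padicValNat_dvd
        have c3 : x + c < 2 ^ (x + c) := Nat.lt_two_pow_self
        have c4 : (2 : ℕ) ^ (x + c) ≤ 2 ^ (2 * (x + c)) :=
          Nat.pow_le_pow_right (by omega) (by omega)
        have c5 : (2 : ℕ) ^ (2 * (x + c)) ≤ 2 ^ padicValNat 2 (x + c) :=
          Nat.pow_le_pow_right (by omega) hv2z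
        omega
      · -- z odd
        have hgeo := geom_sum_nat C (by omega) (x + c)
        have hCz : C ^ (x + c) - 1 = (C - 1) * (Finset.range (x + c)).sum (C ^ ·) :=
          Nat.sub_eq_of_eq_add hgeo.symm
        have hSpar := geom_sum_parity C hCodd (x + c)
        obtain ⟨r, hr⟩ := hodd
        have hSodd : ¬ 2 ∣ (Finset.range (x + c)).sum (C ^ ·) := by omega
        have hS0 : (Finset.range (x + c)).sum (C ^ ·) ≠ 0 := by omega
        rw [hCz, padicValNat.mul (by omega) hS0, v2C1,
          padicValNat.eq_zero_of_not_dvd hSodd] at hv2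
        have h6 : 3 * (2 + padicValNat 2 n) ≤ y * (2 + padicValNat 2 n) :=
          Nat.mul_le_mul_right _ hy3
        omega


  · rintro ⟨rfl, rfl, rfl⟩
    calc (A * k) ^ 2 + (B * k) ^ 2 = (A ^ 2 + B ^ 2) * k ^ 2 := by ring
      _ = C ^ 2 * k ^ 2 := by rw [hABC]
      _ = (C * k) ^ 2 := by ring
end
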